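/- arXiv:1103.1112 — 10 statements merged into one kernel-verified Lean document; each statement's English description precedes it below -/
import Mathlib

section
/- A subgraph H of a graph G with threshold assignment τ contains no resistant subgraph of G if and only if the vertices of H can be ordered v₁, v₂, …, vₙ such that for each i, the vertex vᵢ has at most d_G(vᵢ) − τ(vᵢ) neighbors among {vᵢ₊₁, …, vₙ}. -/
open SimpleGraph

/-- One step of the irreversible activation process: every vertex with at least `τ v`
active neighbors becomes active, and active vertices stay active. -/
def activationStep {V : Type*} (G : SimpleGraph V) (τ : V → ℕ) (A : Set V) : Set V :=
  A ∪ {v | τ v ≤ (G.neighborSet v ∩ A).ncard}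

/-- `D` is a dynamic monopoly (dynamo) of `(G, τ)`: iterating the activation process
starting from `D` eventually activates all vertices. -/
def IsDynamo {V : Type*} (G : SimpleGraph V) (τ : V → ℕ) (D : Set V) : Prop :=
  ∃ j : ℕ, (activationStep G τ)^[j] D = Set.univ

/-- `K` is (the vertex set of) a resistant subgraph of `(G, τ)`:
every vertex `v` of `K` satisfies `d_K(v) ≥ d_G(v) − τ(v) + 1` (as integers). -/
def IsResistant {V : Type*} (G : SimpleGraph V) (τ : V → ℕ) (K : Set V) : Prop :=
  K.Nonempty ∧ ∀ v ∈ K, (G.neighborSet v).ncard + 1 ≤ (G.neighborSet v ∩ K).ncard + τ v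

/-- The minimum size of a dynamic monopoly of `(G, τ)`. -/
noncomputable def dyn {V : Type*} (G : SimpleGraph V) (τ : V → ℕ) : ℕ :=
  sInf {k : ℕ | ∃ D : Set V, D.ncard = k ∧ IsDynamo G τ D}

namespace SimpleGraph

variable {V : Type*} (G : SimpleGraph V) (τ : V → ℕ)

def IsPeelingOrder [DecidableEq V] : List V → Prop
  | [] => True
  | v :: l => (G.neighborSet v ∩ ↑l.toFinset).ncard + τ v ≤ (G.neighborSet v).ncard ∧
      IsPeelingOrder l

variable {G τ}

theorem exists_le_of_not_isResistant {K : Set V} (hK : K.Nonempty) (h : ¬ IsResistant G τ K) :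
    ∃ v ∈ K, (G.neighborSet v ∩ K).ncard + τ v ≤ (G.neighborSet v).ncard := by
  simpa [IsResistant, hK] using h

variable [DecidableEq V]

theorem isPeelingOrder_iff_forall_get (l : List V) :
    IsPeelingOrder G τ l ↔
      ∀ (i : ℕ) (hi : i < l.length),
        (G.neighborSet (l.get ⟨i, hi⟩) ∩ ↑(l.drop (i + 1)).toFinset).ncard
            + τ (l.get ⟨i, hi⟩)
          ≤ (G.neighborSet (l.get ⟨i, hi⟩)).ncard := by
  induction l with
  | nil => simp [IsPeelingOrder]
  | cons v l ih =>
    rw [IsPeelingOrder, ih]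
    constructor
    · rintro ⟨hv, hl⟩ (_ | i) hi
      · exact hv
      · exact hl i (by simpa using hi)
    · intro h
      exact ⟨h 0 (by simp), fun i hi => h (i + 1) (by simpa using hi)⟩

theorem neighborSet_inter_erase (v : V) (S : Finset V) :
    G.neighborSet v ∩ ↑(S.erase v) = G.neighborSet v ∩ ↑S := by
  rw [Finset.coe_erase, ← Set.inter_sdiff_assoc, Set.sdiff_singleton_eq_self]
  exact fun h => G.irrefl h.1

/-- A vertex set without resistant subsets can be peeled off one vertex at a time:
the whole set is not resistant, so some vertex has few neighbors in it. -/
theorem exists_isPeelingOrder (S : Finset V) (hS : ∀ K ⊆ (↑S : Set V), ¬ IsResistant G τ K) :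
    ∃ l : List V, l.Nodup ∧ l.toFinset = S ∧ IsPeelingOrder G τ l := by
  induction S using Finset.strongInduction with
  | H S ih =>
    obtain rfl | hne := S.eq_empty_or_nonempty
    · exact ⟨[], List.nodup_nil, rfl, trivial⟩
    obtain ⟨v, hvS, hv⟩ := exists_le_of_not_isResistant (Finset.coe_nonempty.mpr hne) (hS _ le_rfl)
    obtain ⟨l, hnd, hl, hpeel⟩ := ih (S.erase v) (Finset.erase_ssubset hvS)
      fun K hK => hS K (hK.trans (Finset.coe_subset.mpr (S.erase_subset v)))
    refine ⟨v :: l, List.nodup_cons.mpr ⟨?_, hnd⟩, ?_, ?_, hpeel⟩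
    · simpa [← hl] using Finset.notMem_erase v S
    · rw [List.toFinset_cons, hl, Finset.insert_erase hvS]
    · rwa [hl, neighborSet_inter_erase]

/-- The first vertex of a peeling order that lies in `K` has all its `K`-neighbors later in
the order, so it violates the resistance inequality. -/
theorem not_isResistant_of_isPeelingOrder {l : List V} (hl : IsPeelingOrder G τ l) {K : Set V}
    (hK : K ⊆ ↑l.toFinset) : ¬ IsResistant G τ K := by
  induction l generalizing K with
  | nil =>
    rintro ⟨⟨w, hw⟩, -⟩
    simpa using hK hw
  | cons v l ih =>
    obtain ⟨hv, hl⟩ := hl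
    by_cases hvK : v ∈ K
    · rintro ⟨-, hres⟩
      have hsub : G.neighborSet v ∩ K ⊆ G.neighborSet v ∩ ↑l.toFinset := by
        rintro w ⟨hw, hwK⟩
        have hwv : w ≠ v := fun h => G.irrefl (h ▸ hw)
        simpa [hw, hwv] using hK hwK
      have := Set.ncard_le_ncard hsub (Set.toFinite _)
      have := hres v hvK
      omega
    · refine ih hl fun w hwK => ?_
      have hwv : w ≠ v := fun h => hvK (h ▸ hwK)
      simpa [hwv] using hK hwK

end SimpleGraph

/-- A (induced) subgraph `H` of `(G, τ)` contains no resistant subgraph of `G` iff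
its vertices can be ordered `v₁, …, vₙ` so that each `vᵢ` has at most
`d_G(vᵢ) − τ(vᵢ)` neighbors among `{vᵢ₊₁, …, vₙ}`. -/
theorem stmt0 {V : Type*} [Fintype V] [DecidableEq V] (G : SimpleGraph V) (τ : V → ℕ)
    (H : Set V) :
    (∀ K ⊆ H, ¬ IsResistant G τ K) ↔
      ∃ l : List V, l.Nodup ∧ (↑l.toFinset : Set V) = H ∧
        ∀ (i : ℕ) (hi : i < l.length),
          (G.neighborSet (l.get ⟨i, hi⟩) ∩ ↑(l.drop (i + 1)).toFinset).ncard
              + τ (l.get ⟨i, hi⟩)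
            ≤ (G.neighborSet (l.get ⟨i, hi⟩)).ncard := by
  simp_rw [← isPeelingOrder_iff_forall_get]
  constructor
  · intro hH
    obtain ⟨l, hnd, hl, hpeel⟩ := exists_isPeelingOrder H.toFinite.toFinset (by simpa using hH)
    exact ⟨l, hnd, by simp [hl], hpeel⟩
  · rintro ⟨l, -, rfl, hpeel⟩ K hK
    exact not_isResistant_of_isPeelingOrder hpeel hK
end

section
/- A subset D of vertices of a graph G with threshold assignment τ is a dynamic monopoly if and only if the induced subgraph G \ D contains no resistant subgraph of G. -/
open SimpleGraph

/-- `D` is a dynamic monopoly of `(G, τ)` iff `G \ D` contains no resistant subgraph. -/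
theorem stmt1 {V : Type*} [Fintype V] (G : SimpleGraph V) (τ : V → ℕ) (D : Set V) :
    IsDynamo G τ D ↔ ∀ K ⊆ Dᶜ, ¬ IsResistant G τ K := by
  constructor
  · rintro ⟨j, hj⟩ K hK ⟨⟨x, hxK⟩, hres⟩
    have key : ∀ i, (activationStep G τ)^[i] D ∩ K = ∅ := by
      intro i
      induction i with
      | zero =>
        simp only [Function.iterate_zero, id]
        rw [Set.eq_empty_iff_forall_notMem]
        rintro v ⟨hvD, hvK⟩
        exact hK hvK hvD
      | succ i ih =>
        rw [Function.iterate_succ_apply', Set.eq_empty_iff_forall_notMem]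
        rintro v ⟨hvA, hvK⟩
        have hsub : G.neighborSet v ∩ (activationStep G τ)^[i] D ⊆ G.neighborSet v \ K := by
          rintro w ⟨hw1, hw2⟩
          refine ⟨hw1, fun hwK => ?_⟩
          exact Set.eq_empty_iff_forall_notMem.mp ih w ⟨hw2, hwK⟩
        have hle : (G.neighborSet v ∩ (activationStep G τ)^[i] D).ncard ≤
            (G.neighborSet v \ K).ncard := Set.ncard_le_ncard hsub (Set.toFinite _)
        have hsplit : (G.neighborSet v ∩ K).ncard + (G.neighborSet v \ K).ncard =
            (G.neighborSet v).ncard :=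
          Set.ncard_inter_add_ncard_diff_eq_ncard _ _ (Set.toFinite _)
        have hres' := hres v hvK
        have hlt : (G.neighborSet v ∩ (activationStep G τ)^[i] D).ncard < τ v := by omega
        rcases hvA with h | h
        · exact Set.eq_empty_iff_forall_notMem.mp ih v ⟨h, hvK⟩
        · exact absurd h (not_le.mpr hlt)
    have := key j
    rw [hj] at this
    exact Set.eq_empty_iff_forall_notMem.mp this x ⟨Set.mem_univ x, hxK⟩
  · intro h
    -- find a fixed point
    have mono : ∀ A : Set V, A ⊆ activationStep G τ A := fun A => Set.subset_union_left
    have hfix : ∃ j, (activationStep G τ)^[j+1] D = (activationStep G τ)^[j] D := by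
      by_contra hc
      push_neg at hc
      have hsm : StrictMono (fun j => ((activationStep G τ)^[j] D).ncard) := by
        apply strictMono_nat_of_lt_succ
        intro n
        apply Set.ncard_lt_ncard _ (Set.toFinite _)
        rw [Function.iterate_succ_apply']
        exact (mono _).ssubset_of_ne (fun he => hc n (by
          rw [Function.iterate_succ_apply']; exact he.symm))
      have h1 : Fintype.card V + 1 ≤ ((activationStep G τ)^[Fintype.card V + 1] D).ncard :=
        hsm.le_apply
      have h2 : ((activationStep G τ)^[Fintype.card V + 1] D).ncard ≤ Fintype.card V := by
        simpa [Set.ncard_univ, Nat.card_eq_fintype_card] using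
          Set.ncard_le_ncard (Set.subset_univ ((activationStep G τ)^[Fintype.card V + 1] D))
            Set.finite_univ
      omega
    have hDAall : ∀ n, D ⊆ (activationStep G τ)^[n] D := by
      intro n
      induction n with
      | zero => simp
      | succ n ih => rw [Function.iterate_succ_apply']; exact ih.trans (mono _)
    obtain ⟨j, hj⟩ := hfix
    set A := (activationStep G τ)^[j] D with hA
    refine ⟨j, ?_⟩
    by_contra hne
    have hKne : Aᶜ.Nonempty := by
      rw [Set.nonempty_compl]; exact hne
    refine h Aᶜ ?_ ⟨hKne, ?_⟩
    · exact Set.compl_subset_compl.mpr (hDAall j)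
    · intro v hv
      have hvA : v ∉ A := hv
      have hvstep : v ∉ activationStep G τ A := by
        rw [← Function.iterate_succ_apply' (activationStep G τ) j D, hj]; exact hvA
      have hτ : ¬ τ v ≤ (G.neighborSet v ∩ A).ncard := fun hle => hvstep (Or.inr hle)
      have hsplit : (G.neighborSet v ∩ Aᶜ).ncard + (G.neighborSet v \ Aᶜ).ncard =
          (G.neighborSet v).ncard :=
        Set.ncard_inter_add_ncard_diff_eq_ncard _ _ (Set.toFinite _)
      have heq : G.neighborSet v \ Aᶜ = G.neighborSet v ∩ A := by
        ext w; simp [Set.mem_diff]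
      rw [heq] at hsplit
      omega
end

section
/- Let D be a dynamic monopoly of a graph G with threshold assignment τ, let H = G \ D, and let t_max be the maximum threshold among vertices of H. Then ∑_{v∈H} τ(v) ≤ |E(G)| − |E(G[D])| − δ(G) + t_max, where δ(G) is the minimum degree of G and G[D] is the subgraph induced on D. -/
open SimpleGraph

/-- If `D` is a dynamo, `H = G \ D` nonempty, and `t_max` is the maximum threshold on `H`,
then `∑_{v ∈ H} τ(v) ≤ |E(G)| − |E(G[D])| − δ(G) + t_max` (stated additively in `ℕ`). -/
theorem stmt3 {V : Type*} [Fintype V] [DecidableEq V] (G : SimpleGraph V) (τ : V → ℕ)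
    (D : Finset V) (hD : IsDynamo G τ ↑D) (hH : (Dᶜ : Finset V).Nonempty) :
    ∑ v ∈ Dᶜ, τ v
        + {e | e ∈ G.edgeSet ∧ ∀ v ∈ e, v ∈ D}.ncard
        + sInf (Set.range fun v : V => (G.neighborSet v).ncard)
      ≤ G.edgeSet.ncard + (Dᶜ : Finset V).sup τ := by
  classical
  obtain ⟨J, hJ⟩ := hD
  set A : ℕ → Set V := fun j => (activationStep G τ)^[j] ↑D with hA
  have hAsucc : ∀ j, A (j + 1) = activationStep G τ (A j) := by
    intro j
    simp only [hA, Function.iterate_succ_apply']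
  have hmem : ∀ v : V, ∃ j, v ∈ A j := fun v => ⟨J, by simp [hA, hJ]⟩
  set t : V → ℕ := fun v => Nat.find (hmem v) with htdef
  have ht : ∀ v, v ∈ A (t v) := fun v => Nat.find_spec (hmem v)
  have htle : ∀ v j, v ∈ A j → t v ≤ j := fun v j h => Nat.find_min' (hmem v) h
  -- ranking function
  set c : ℕ := Fintype.card V with hc
  set e : V → ℕ := fun v => ((Fintype.equivFin V) v : ℕ) with he
  have helt : ∀ v, e v < c := fun v => ((Fintype.equivFin V) v).2
  set r : V → ℕ := fun v => t v * c + e v with hr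
  have hrlt : ∀ u v, t u < t v → r u < r v := by
    intro u v h
    have h1 : (t u + 1) * c ≤ t v * c := Nat.mul_le_mul_right c h
    have h2 : e u < c := helt u
    simp only [hr]
    calc t u * c + e u < t u * c + c := by omega
      _ = (t u + 1) * c := by ring
      _ ≤ t v * c := h1
      _ ≤ t v * c + e v := Nat.le_add_right _ _
  have hrinj : Function.Injective r := by
    intro u v huv
    rcases lt_trichotomy (t u) (t v) with h | h | h
    · exact absurd huv (by have := hrlt u v h; omega)
    · have : e u = e v := by simp only [hr] at huv; rw [h] at huv; omega
      exact (Fintype.equivFin V).injective (Fin.ext this)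
    · exact absurd huv.symm (by have := hrlt v u h; omega)
  -- key fact: vertices outside D are activated with τ v earlier-ranked neighbors
  have hkey : ∀ v ∉ D, ∀ u ∈ G.neighborSet v ∩ A (t v - 1), r u < r v := by
    intro v hv u hu
    have htv : t v ≠ 0 := by
      intro h0
      have := ht v
      rw [h0] at this
      simp only [hA, Function.iterate_zero_apply, Finset.coe_sort_coe] at this
      exact hv (by exact_mod_cast this)
    have : t u ≤ t v - 1 := htle u _ hu.2
    exact hrlt u v (by omega)
  have hthresh : ∀ v ∉ D, τ v ≤ (G.neighborSet v ∩ A (t v - 1)).ncard := by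
    intro v hv
    have htv : t v ≠ 0 := by
      intro h0
      have := ht v
      rw [h0] at this
      simp only [hA, Function.iterate_zero_apply] at this
      exact hv (by exact_mod_cast this)
    have hstep : A (t v) = activationStep G τ (A (t v - 1)) := by
      conv_lhs => rw [show t v = t v - 1 + 1 from by omega]
      exact hAsucc _
    have hvmem := ht v
    rw [hstep] at hvmem
    rcases hvmem with h | h
    · exact absurd (htle v _ h) (by omega)
    · exact h
  -- the finsets of counted edges
  set F : V → Finset (Sym2 V) :=
    fun v => ((G.neighborFinset v).filter (fun u => r u < r v)).image (fun u => s(v, u))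
    with hF
  have hFcard : ∀ v, (F v).card = ((G.neighborFinset v).filter (fun u => r u < r v)).card := by
    intro v
    apply Finset.card_image_of_injOn
    intro a _ b _ hab
    simp only [Sym2.eq_iff] at hab
    rcases hab with ⟨_, h⟩ | ⟨h1, h2⟩
    · exact h
    · rw [← h1, h2]
  have hτF : ∀ v ∉ D, τ v ≤ (F v).card := by
    intro v hv
    rw [hFcard]
    calc τ v ≤ (G.neighborSet v ∩ A (t v - 1)).ncard := hthresh v hv
      _ ≤ (((G.neighborFinset v).filter (fun u => r u < r v) : Finset V) : Set V).ncard := by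
          apply Set.ncard_le_ncard _ (Finset.finite_toSet _)
          intro u hu
          simp only [Finset.coe_filter, Set.mem_setOf_eq, mem_neighborFinset]
          exact ⟨hu.1, hkey v hv u hu⟩
      _ = _ := Set.ncard_coe_finset _
  -- choose the maximal-rank vertex of H
  obtain ⟨m, hm, hmax⟩ := Finset.exists_max_image (Dᶜ : Finset V) r hH
  have hmD : m ∉ D := Finset.mem_compl.mp hm
  have hFm : (F m).card = (G.neighborSet m).ncard := by
    rw [hFcard]
    have : (G.neighborFinset m).filter (fun u => r u < r m) = G.neighborFinset m := by
      apply Finset.filter_true_of_mem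
      intro u hu
      by_cases huD : u ∈ D
      · have htu : t u = 0 := by
          apply Nat.le_zero.mp
          apply htle
          simp only [hA, Function.iterate_zero_apply]
          exact_mod_cast huD
        have htm : t m ≠ 0 := by
          intro h0
          have := ht m
          rw [h0] at this
          simp only [hA, Function.iterate_zero_apply] at this
          exact hmD (by exact_mod_cast this)
        exact hrlt u m (by omega)
      · have hune : u ≠ m := fun h => G.irrefl (h ▸ (mem_neighborFinset G m u).mp hu)
        have := hmax u (Finset.mem_compl.mpr huD)
        exact lt_of_le_of_ne this (fun h => hune (hrinj h))
    rw [this, ← Set.ncard_coe_finset]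
    congr 1
    ext u
    simp
  -- disjointness of the edge families
  have hdisj : ∀ v ∈ (Dᶜ : Finset V), ∀ w ∈ (Dᶜ : Finset V), v ≠ w → Disjoint (F v) (F w) := by
    intro v _ w _ hvw
    rw [Finset.disjoint_left]
    intro x hxv hxw
    simp only [hF, Finset.mem_image, Finset.mem_filter, mem_neighborFinset] at hxv hxw
    obtain ⟨a, ⟨_, hra⟩, hxa⟩ := hxv
    obtain ⟨b, ⟨_, hrb⟩, hxb⟩ := hxw
    rw [← hxa] at hxb
    simp only [Sym2.eq_iff] at hxb
    rcases hxb with ⟨h1, _⟩ | ⟨h1, h2⟩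
    · exact hvw h1.symm
    · subst h1; subst h2; omega
  -- the union of edge families avoids edges inside D
  have hsub : (Dᶜ : Finset V).biUnion F ⊆
      G.edgeFinset.filter (fun x => ¬ ∀ v ∈ x, v ∈ D) := by
    intro x hx
    simp only [Finset.mem_biUnion] at hx
    obtain ⟨v, hv, hxv⟩ := hx
    simp only [hF, Finset.mem_image, Finset.mem_filter, mem_neighborFinset] at hxv
    obtain ⟨u, ⟨hadj, _⟩, hxu⟩ := hxv
    rw [Finset.mem_filter, mem_edgeFinset]
    constructor
    · rw [← hxu]; exact hadj
    · intro hall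
      exact (Finset.mem_compl.mp hv) (hall v (by rw [← hxu]; exact Sym2.mem_mk_left v u))
  -- counting
  have hcount : ∑ v ∈ (Dᶜ : Finset V), (F v).card
      + (G.edgeFinset.filter (fun x => ∀ v ∈ x, v ∈ D)).card ≤ G.edgeFinset.card := by
    rw [← Finset.card_biUnion hdisj]
    have h1 : ((Dᶜ : Finset V).biUnion F).card
        ≤ (G.edgeFinset.filter (fun x => ¬ ∀ v ∈ x, v ∈ D)).card :=
      Finset.card_le_card hsub
    have h2 := Finset.card_filter_add_card_filter_not
      (s := G.edgeFinset) (p := fun x => ∀ v ∈ x, v ∈ D)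
    omega
  -- translate ncards in the goal
  have hE : G.edgeSet.ncard = G.edgeFinset.card := by
    rw [← Set.ncard_coe_finset, coe_edgeFinset]
  have hED : {e | e ∈ G.edgeSet ∧ ∀ v ∈ e, v ∈ D}.ncard
      = (G.edgeFinset.filter (fun x => ∀ v ∈ x, v ∈ D)).card := by
    rw [← Set.ncard_coe_finset]
    congr 1
    ext x
    simp [mem_edgeFinset]
  have hδ : sInf (Set.range fun v : V => (G.neighborSet v).ncard)
      ≤ (G.neighborSet m).ncard := Nat.sInf_le ⟨m, rfl⟩
  have htmax : τ m ≤ (Dᶜ : Finset V).sup τ := Finset.le_sup hm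
  -- assemble
  have hsplit : ∑ v ∈ (Dᶜ : Finset V).erase m, τ v + τ m = ∑ v ∈ (Dᶜ : Finset V), τ v :=
    Finset.sum_erase_add _ _ hm
  have hsplitF : ∑ v ∈ (Dᶜ : Finset V).erase m, (F v).card + (F m).card
      = ∑ v ∈ (Dᶜ : Finset V), (F v).card :=
    Finset.sum_erase_add _ _ hm
  have hsumτ : ∑ v ∈ (Dᶜ : Finset V).erase m, τ v
      ≤ ∑ v ∈ (Dᶜ : Finset V).erase m, (F v).card := by
    apply Finset.sum_le_sum
    intro v hv
    exact hτF v (Finset.mem_compl.mp (Finset.mem_of_mem_erase hv))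
  rw [hE, hED]
  have := hτF m hmD
  omega
end

section
/- Let D be a dynamic monopoly of a graph G with threshold assignment τ, and let H = G \ D. If τ(v) ≤ d_G(v) for every vertex v ∈ H, then ∑_{v∈H} τ(v) ≤ |E(G)|. -/
open SimpleGraph

/-- If `D` is a dynamo and `τ(v) ≤ d_G(v)` for all `v ∈ H = G \ D`, then
`∑_{v ∈ H} τ(v) ≤ |E(G)|`. -/
theorem stmt4 {V : Type*} [Fintype V] [DecidableEq V] (G : SimpleGraph V) (τ : V → ℕ)
    (D : Finset V) (hD : IsDynamo G τ ↑D)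
    (hτ : ∀ v ∈ (Dᶜ : Finset V), τ v ≤ (G.neighborSet v).ncard) :
    ∑ v ∈ Dᶜ, τ v ≤ G.edgeSet.ncard := by
  classical
  obtain ⟨J, hJ⟩ := hD
  set A : ℕ → Set V := fun j => (activationStep G τ)^[j] ↑D with hA
  have hsucc : ∀ j, A (j + 1) = activationStep G τ (A j) := by
    intro j; simp [hA, Function.iterate_succ_apply']
  have hmono : Monotone A := by
    apply monotone_nat_of_le_succ
    intro j
    rw [hsucc j]
    exact Set.subset_union_left
  have hmem : ∀ v : V, ∃ j, v ∈ A j := fun v => ⟨J, by simp [hA, hJ]⟩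
  set t : V → ℕ := fun v => Nat.find (hmem v) with ht
  have htspec : ∀ v, v ∈ A (t v) := fun v => Nat.find_spec (hmem v)
  have htle : ∀ v j, v ∈ A j → t v ≤ j := fun v j h => Nat.find_min' (hmem v) h
  -- main bound for each inactive vertex
  have key : ∀ v ∈ (Dᶜ : Finset V),
      τ v ≤ ((G.neighborFinset v).filter (fun u => t u < t v)).card := by
    intro v hv
    have hvD : v ∉ D := Finset.mem_compl.mp hv
    have htv0 : t v ≠ 0 := by
      intro h0
      have := htspec v
      rw [h0] at this
      simp only [hA] at this
      exact hvD (by simpa using this)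
    obtain ⟨k, hk⟩ := Nat.exists_eq_succ_of_ne_zero htv0
    have hvk : v ∉ A k := Nat.find_min (hmem v) (lt_of_lt_of_le (Nat.lt_succ_self k) (le_of_eq hk.symm))
    have hvk1 : v ∈ activationStep G τ (A k) := by
      rw [← hsucc k, show k + 1 = t v from hk.symm]; exact htspec v
    have hτv : τ v ≤ (G.neighborSet v ∩ A k).ncard := by
      rcases hvk1 with h | h
      · exact absurd h hvk
      · exact h
    refine hτv.trans ?_
    have hsub : G.neighborSet v ∩ A k ⊆
        ↑((G.neighborFinset v).filter (fun u => t u < t v)) := by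
      intro u hu
      simp only [Finset.coe_filter, Set.mem_setOf_eq, mem_neighborFinset]
      refine ⟨hu.1, ?_⟩
      have h1 : t u ≤ k := htle u k hu.2
      rw [hk]
      exact Nat.lt_succ_of_le h1
    calc (G.neighborSet v ∩ A k).ncard
        ≤ (↑((G.neighborFinset v).filter (fun u => t u < t v)) : Set V).ncard :=
          Set.ncard_le_ncard hsub (Finset.finite_toSet _)
      _ = _ := Set.ncard_coe_finset _
  -- assign edges to vertices
  set f : V → Finset (Sym2 V) :=
    fun v => ((G.neighborFinset v).filter (fun u => t u < t v)).image (fun u => s(v, u)) with hf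
  have hcard : ∀ v, (f v).card = ((G.neighborFinset v).filter (fun u => t u < t v)).card := by
    intro v
    apply Finset.card_image_of_injective
    intro a b hab
    exact Sym2.congr_right.mp hab
  have hdisj : ∀ v ∈ (Dᶜ : Finset V), ∀ w ∈ (Dᶜ : Finset V), v ≠ w → Disjoint (f v) (f w) := by
    intro v _ w _ hvw
    rw [Finset.disjoint_left]
    intro e hev hew
    simp only [hf, Finset.mem_image, Finset.mem_filter, mem_neighborFinset] at hev hew
    obtain ⟨a, ⟨_, hta⟩, hea⟩ := hev
    obtain ⟨b, ⟨_, htb⟩, heb⟩ := hew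
    rw [← hea] at heb
    rw [Sym2.eq_iff] at heb
    rcases heb with ⟨h1, h2⟩ | ⟨h1, h2⟩
    · exact hvw h1.symm
    · rw [h1] at htb; rw [h2] at htb
      exact absurd (hta.trans htb) (lt_irrefl _)
  have hsum : ∑ v ∈ (Dᶜ : Finset V), τ v ≤ ((Dᶜ : Finset V).biUnion f).card := by
    rw [Finset.card_biUnion hdisj]
    apply Finset.sum_le_sum
    intro v hv
    rw [hcard v]
    exact key v hv
  refine hsum.trans ?_
  have hsub : (Dᶜ : Finset V).biUnion f ⊆ G.edgeFinset := by
    intro e he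
    rw [Finset.mem_biUnion] at he
    obtain ⟨v, _, hev⟩ := he
    simp only [hf, Finset.mem_image, Finset.mem_filter, mem_neighborFinset] at hev
    obtain ⟨a, ⟨hadj, _⟩, hea⟩ := hev
    rw [mem_edgeFinset, ← hea]
    exact hadj
  calc ((Dᶜ : Finset V).biUnion f).card ≤ G.edgeFinset.card := Finset.card_le_card hsub
    _ = G.edgeSet.ncard := by rw [← Set.ncard_coe_finset, coe_edgeFinset]
end

section
/- Let G be a graph on n vertices with minimum degree at least 2, no connected component isomorphic to an odd cycle, and constant threshold τ(v) = 2 for all vertices. Then G has a dynamic monopoly of size at most n/2. -/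
open SimpleGraph

section

variable {V : Type*} {G : SimpleGraph V}

section Activation

variable (G) (τ : V → ℕ)

lemma subset_activationStep (A : Set V) : A ⊆ activationStep G τ A :=
  Set.subset_union_left

def activationClosure (D : Set V) : Set V :=
  ⋃ j, (activationStep G τ)^[j] D

lemma subset_activationClosure (D : Set V) : D ⊆ activationClosure G τ D :=
  Set.subset_iUnion_of_subset 0 subset_rfl

lemma monotone_iterate_activationStep (D : Set V) :
    Monotone fun j => (activationStep G τ)^[j] D :=
  monotone_nat_of_le_succ fun j => by
    rw [Function.iterate_succ_apply']
    exact subset_activationStep G τ _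

variable [Finite V]

lemma activationStep_mono : Monotone (activationStep G τ) := by
  rintro A B hAB v (hv | hv)
  · exact Or.inl (hAB hv)
  · exact Or.inr (hv.trans (Set.ncard_le_ncard (Set.inter_subset_inter_right _ hAB)))

variable {G τ}

lemma activationClosure_subset {D T : Set V} (hD : D ⊆ T) (hT : activationStep G τ T ⊆ T) :
    activationClosure G τ D ⊆ T := by
  refine Set.iUnion_subset fun j => ?_
  induction j with
  | zero => exact hD
  | succ j ih =>
    rw [Function.iterate_succ_apply']
    exact (activationStep_mono G τ ih).trans hT

lemma exists_activationClosure_eq_iterate (D : Set V) :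
    ∃ j, activationClosure G τ D = (activationStep G τ)^[j] D := by
  obtain ⟨n, hn⟩ := WellFoundedGT.monotone_chain_condition
    ⟨_, monotone_iterate_activationStep G τ D⟩
  refine ⟨n, (Set.iUnion_subset fun j => ?_).antisymm
    (Set.subset_iUnion_of_subset n subset_rfl)⟩
  rcases le_total j n with hjn | hnj
  · exact monotone_iterate_activationStep G τ D hjn
  · exact (hn j hnj).symm.subset

lemma activationStep_activationClosure (D : Set V) :
    activationStep G τ (activationClosure G τ D) ⊆ activationClosure G τ D := by
  obtain ⟨n, hn⟩ := exists_activationClosure_eq_iterate (τ := τ) (G := G) D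
  rw [hn, ← Function.iterate_succ_apply' (activationStep G τ)]
  exact Set.subset_iUnion_of_subset (n + 1) subset_rfl |>.trans hn.subset

lemma activationClosure_subset_activationClosure {A D : Set V}
    (h : A ⊆ activationClosure G τ D) :
    activationClosure G τ A ⊆ activationClosure G τ D :=
  activationClosure_subset h (activationStep_activationClosure D)

lemma activationClosure_mono {A D : Set V} (h : A ⊆ D) :
    activationClosure G τ A ⊆ activationClosure G τ D :=
  activationClosure_subset_activationClosure (h.trans (subset_activationClosure G τ D))

lemma isDynamo_of_activationClosure_eq_univ {D : Set V}
    (h : activationClosure G τ D = Set.univ) : IsDynamo G τ D := by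
  obtain ⟨n, hn⟩ := exists_activationClosure_eq_iterate (τ := τ) (G := G) D
  exact ⟨n, hn ▸ h⟩

end Activation

lemma mem_activationClosure_of_adj [Finite V] {D : Set V} {v x y : V} (hx : G.Adj v x)
    (hy : G.Adj v y) (hxy : x ≠ y) (hxD : x ∈ activationClosure G (fun _ => 2) D)
    (hyD : y ∈ activationClosure G (fun _ => 2) D) :
    v ∈ activationClosure G (fun _ => 2) D := by
  refine activationStep_activationClosure D (Or.inr ?_)
  calc 2 = ({x, y} : Set V).ncard := (Set.ncard_pair hxy).symm
    _ ≤ _ := Set.ncard_le_ncard <| Set.insert_subset (Set.mem_inter hx hxD)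
        (Set.singleton_subset_iff.2 (Set.mem_inter hy hyD))

/-- `A` is a union of vertex sets of connected components. -/
def IsAdjClosed (G : SimpleGraph V) (A : Set V) : Prop :=
  ∀ ⦃v u⦄, v ∈ A → G.Adj v u → u ∈ A

lemma IsAdjClosed.mem_of_reachable {A : Set V} (hA : IsAdjClosed G A) {x y : V}
    (hxy : G.Reachable x y) (hx : x ∈ A) : y ∈ A := by
  obtain ⟨p⟩ := hxy
  induction p with
  | nil => exact hx
  | cons h _ ih => exact ih (hA hx h)

/-- Paths and cycles are encoded as sequences `ℕ → V`, a cycle of length `k` as a `k`-periodic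
one; the values of a path past `n` are irrelevant. -/
structure IsPathSeq (G : SimpleGraph V) (n : ℕ) (p : ℕ → V) : Prop where
  adj : ∀ i < n, G.Adj (p i) (p (i + 1))
  injOn : Set.InjOn p (Set.Iic n)

structure IsCycleSeq (G : SimpleGraph V) (k : ℕ) (c : ℕ → V) : Prop where
  three_le : 3 ≤ k
  adj : ∀ i, G.Adj (c i) (c (i + 1))
  periodic : Function.Periodic c k
  injOn : Set.InjOn c (Set.Iio k)

namespace IsPathSeq

variable {n : ℕ} {p : ℕ → V}

lemma mono (hp : IsPathSeq G n p) {m : ℕ} (hmn : m ≤ n) : IsPathSeq G m p :=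
  ⟨fun i hi => hp.adj i (by omega), hp.injOn.mono (Set.Iic_subset_Iic.2 hmn)⟩

lemma cons (hp : IsPathSeq G n p) {u : V} (hu : G.Adj u (p 0)) (hup : ∀ j ≤ n, p j ≠ u) :
    IsPathSeq G (n + 1) fun | 0 => u | i + 1 => p i := by
  refine ⟨fun i hi => ?_, fun i hi j hj hij => ?_⟩
  · rcases i with _ | i
    · exact hu
    · exact hp.adj i (by omega)
  · simp only [Set.mem_Iic] at hi hj
    rcases i with _ | i <;> rcases j with _ | j
    · rfl
    · exact absurd hij.symm (hup j (by omega))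
    · exact absurd hij (hup i (by omega))
    · exact congrArg (· + 1) (hp.injOn (by simp; omega) (by simp; omega) hij)

lemma isCycleSeq (hp : IsPathSeq G n p) (hn : 2 ≤ n) (hclose : G.Adj (p n) (p 0)) :
    IsCycleSeq G (n + 1) fun i => p (i % (n + 1)) := by
  refine ⟨by omega, fun i => ?_, fun i => by simp, fun i hi j hj hij => ?_⟩
  · rcases Nat.lt_or_ge (i % (n + 1)) n with h | h
    · rw [Nat.add_mod, Nat.mod_eq_of_lt (a := i % (n + 1) + 1 % (n + 1)) (by
        rw [Nat.mod_eq_of_lt (by omega : 1 < n + 1)]; omega)]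
      simpa [Nat.mod_eq_of_lt (by omega : 1 < n + 1)] using hp.adj _ h
    · have hi : i % (n + 1) = n := by have := Nat.mod_lt i (by omega : 0 < n + 1); omega
      rw [hi, Nat.add_mod, hi, Nat.mod_eq_of_lt (by omega : 1 < n + 1),
        Nat.mod_self]
      exact hclose
  · simp only [Set.mem_Iio] at hi hj
    simp only [Nat.mod_eq_of_lt hi, Nat.mod_eq_of_lt hj] at hij
    exact hp.injOn (by simp; omega) (by simp; omega) hij

end IsPathSeq

namespace IsCycleSeq

variable {k : ℕ} {c : ℕ → V}

lemma isPathSeq (hc : IsCycleSeq G k c) {n : ℕ} (hn : n < k) : IsPathSeq G n c :=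
  ⟨fun i _ => hc.adj i, hc.injOn.mono fun i hi => by simp at hi ⊢; omega⟩

lemma apply_mod (hc : IsCycleSeq G k c) (i : ℕ) : c (i % k) = c i :=
  hc.periodic.map_mod_nat i

lemma rotate (hc : IsCycleSeq G k c) (r : ℕ) : IsCycleSeq G k fun i => c (i + r) := by
  refine ⟨hc.three_le, fun i => by simpa [Nat.add_right_comm] using hc.adj (i + r),
    fun i => by simpa [Nat.add_right_comm] using hc.periodic (i + r), fun i hi j hj hij => ?_⟩
  simp only [Set.mem_Iio] at hi hj
  rw [← hc.apply_mod, ← hc.apply_mod (j + r)] at hij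
  have := hc.injOn (Nat.mod_lt _ (by have := hc.three_le; omega))
    (Nat.mod_lt _ (by have := hc.three_le; omega)) hij
  have := Nat.ModEq.add_right_cancel' r this
  rwa [Nat.ModEq, Nat.mod_eq_of_lt hi, Nat.mod_eq_of_lt hj] at this

lemma range_rotate (hc : IsCycleSeq G k c) (r : ℕ) :
    Set.range (fun i => c (i + r)) = Set.range c := by
  refine (Set.range_comp_subset_range _ c).antisymm ?_
  rintro _ ⟨j, rfl⟩
  refine ⟨j + r * k - r, ?_⟩
  have : r ≤ r * k := Nat.le_mul_of_pos_right r (by have := hc.three_le; omega)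
  rw [Function.comp_apply, Nat.sub_add_cancel (by omega)]
  exact_mod_cast hc.periodic.nat_mul r j

lemma range_eq_image (hc : IsCycleSeq G k c) : Set.range c = c '' Set.Iio k := by
  refine (Set.image_subset_range _ _).antisymm' ?_
  rintro _ ⟨i, rfl⟩
  exact ⟨i % k, Nat.mod_lt _ (by have := hc.three_le; omega), hc.apply_mod i⟩

lemma ncard_range (hc : IsCycleSeq G k c) : (Set.range c).ncard = k := by
  rw [hc.range_eq_image, hc.injOn.ncard_image, Set.ncard_Iio_nat]

end IsCycleSeq

section CycleExistence

variable [Finite V] {R : Set V}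

lemma exists_unextendable_isPathSeq (hR : IsAdjClosed G R) {v : V} (hv : v ∈ R) :
    ∃ n p, IsPathSeq G n p ∧ (∀ i ≤ n, p i ∈ R) ∧
      ∀ u, G.Adj (p 0) u → ∃ j ≤ n, p j = u := by
  by_contra! hext
  have hpaths : ∀ n, ∃ p, IsPathSeq G n p ∧ ∀ i ≤ n, p i ∈ R := by
    intro n
    induction n with
    | zero => exact ⟨fun _ => v, ⟨by simp, by simp [Set.InjOn]⟩, fun _ _ => hv⟩
    | succ n ih =>
      obtain ⟨p, hp, hpR⟩ := ih
      obtain ⟨u, hu, hup⟩ := hext n p hp hpR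
      refine ⟨_, hp.cons hu.symm hup, fun i hi => ?_⟩
      rcases i with _ | i
      · exact hR (hpR 0 (Nat.zero_le n)) hu
      · exact hpR i (by omega)
  obtain ⟨p, hp, -⟩ := hpaths (Nat.card V)
  have := hp.injOn.ncard_image ▸ Set.ncard_le_card (p '' Set.Iic (Nat.card V))
  simp at this

lemma exists_isCycleSeq (hR : IsAdjClosed G R) (hdeg : ∀ v ∈ R, 2 ≤ (G.neighborSet v).ncard)
    (hne : R.Nonempty) : ∃ k c, IsCycleSeq G k c ∧ ∀ i, c i ∈ R := by
  obtain ⟨v, hv⟩ := hne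
  obtain ⟨n, p, hp, hpR, hnbr⟩ := exists_unextendable_isPathSeq hR hv
  obtain ⟨x, hx, y, hy, hxy⟩ := (Set.one_lt_ncard (Set.toFinite _)).1 (hdeg _ (hpR 0 n.zero_le))
  obtain ⟨a, ha, rfl⟩ := hnbr x hx
  obtain ⟨b, hb, rfl⟩ := hnbr y hy
  have hfar : ∃ j, 2 ≤ j ∧ j ≤ n ∧ G.Adj (p 0) (p j) := by
    have ha0 : a ≠ 0 := by rintro rfl; exact G.irrefl hx
    have hb0 : b ≠ 0 := by rintro rfl; exact G.irrefl hy
    have hab : a ≠ b := by rintro rfl; exact hxy rfl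
    rcases Nat.lt_or_ge a 2 with h | h
    · exact ⟨b, by omega, hb, hy⟩
    · exact ⟨a, h, ha, hx⟩
  obtain ⟨j, hj2, hjn, hj⟩ := hfar
  exact ⟨_, _, (hp.mono hjn).isCycleSeq hj2 hj.symm,
    fun i => hpR _ ((Nat.lt_succ_iff.1 (Nat.mod_lt i j.succ_pos)).trans hjn)⟩

end CycleExistence

namespace IsCycleSeq

variable {k : ℕ} {c : ℕ → V}

lemma supp_connectedComponentMk_eq_range (hc : IsCycleSeq G k c)
    (hclosed : IsAdjClosed G (Set.range c)) :
    (G.connectedComponentMk (c 0)).supp = Set.range c := by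
  ext v
  rw [ConnectedComponent.mem_supp_iff, ConnectedComponent.eq]
  refine ⟨fun h => hclosed.mem_of_reachable h.symm ⟨0, rfl⟩, ?_⟩
  rintro ⟨i, rfl⟩
  induction i with
  | zero => rfl
  | succ i ih => exact (hc.adj i).reachable.symm.trans ih

variable {R : Set V}

/-- A chord would cut off a shorter cycle. -/
lemma eq_one_or_eq_sub_one_of_adj (hc : IsCycleSeq G k c) (hcR : ∀ i, c i ∈ R)
    (hshort : ∀ k' c', IsCycleSeq G k' c' → (∀ i, c' i ∈ R) → k ≤ k') {j : ℕ}
    (hj : j < k) (hadj : G.Adj (c 0) (c j)) :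
    j = 1 ∨ j = k - 1 := by
  by_contra! hchord
  have hj0 : j ≠ 0 := by rintro rfl; exact G.irrefl hadj
  have := hshort _ _ ((hc.isPathSeq hj).isCycleSeq (by omega) hadj.symm)
    fun i => hcR (i % (j + 1))
  omega

lemma ncard_neighborSet_apply_zero (hc : IsCycleSeq G k c) (hcR : ∀ i, c i ∈ R)
    (hshort : ∀ k' c', IsCycleSeq G k' c' → (∀ i, c' i ∈ R) → k ≤ k')
    (hclosed : IsAdjClosed G (Set.range c)) :
    (G.neighborSet (c 0)).ncard = 2 := by
  have hk := hc.three_le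
  have hnbr : G.neighborSet (c 0) = {c 1, c (k - 1)} := by
    refine Set.Subset.antisymm (fun u hu => ?_) ?_
    · obtain ⟨j, rfl⟩ := hclosed ⟨0, rfl⟩ hu
      rw [← hc.apply_mod j] at hu ⊢
      rcases hc.eq_one_or_eq_sub_one_of_adj hcR hshort (Nat.mod_lt j (by omega)) hu with h | h
      · exact Or.inl (by rw [h])
      · exact Or.inr (by rw [h]; rfl)
    · refine Set.insert_subset (hc.adj 0) (Set.singleton_subset_iff.2 ?_)
      have := hc.adj (k - 1)
      rw [Nat.sub_add_cancel (by omega), ← hc.apply_mod k, Nat.mod_self] at this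
      exact this.symm
  rw [hnbr, Set.ncard_pair fun h => ?_]
  have := hc.injOn (by simp; omega) (by simp; omega) h
  omega

lemma ncard_neighborSet (hc : IsCycleSeq G k c) (hcR : ∀ i, c i ∈ R)
    (hshort : ∀ k' c', IsCycleSeq G k' c' → (∀ i, c' i ∈ R) → k ≤ k')
    (hclosed : IsAdjClosed G (Set.range c)) (i : ℕ) :
    (G.neighborSet (c i)).ncard = 2 := by
  simpa using (hc.rotate i).ncard_neighborSet_apply_zero (fun _ => hcR _) hshort
    (hc.range_rotate i ▸ hclosed)

end IsCycleSeq

def IsHalfSeedable (G : SimpleGraph V) (S A : Set V) : Prop :=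
  ∃ D ⊆ A, A ⊆ activationClosure G (fun _ => 2) (S ∪ D) ∧ 2 * D.ncard ≤ A.ncard

section Seeds

variable [Finite V]

lemma isHalfSeedable_pair {S : Set V} {u v w : V} (hwu : G.Adj w u) (hu : u ∈ S)
    (hwv : G.Adj w v) (hv : v ∉ S) : IsHalfSeedable G S {v, w} := by
  refine ⟨{v}, by simp, Set.insert_subset ?_ (Set.singleton_subset_iff.2 ?_), ?_⟩
  · exact subset_activationClosure G _ _ (Or.inr rfl)
  · refine mem_activationClosure_of_adj hwu hwv (by rintro rfl; exact hv hu) ?_ ?_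
    · exact subset_activationClosure G _ _ (Or.inl hu)
    · exact subset_activationClosure G _ _ (Or.inr rfl)
  · rw [Set.ncard_singleton, Set.ncard_pair hwv.ne.symm]

namespace IsCycleSeq

variable {k : ℕ} {c : ℕ → V}

lemma range_subset_activationClosure (hc : IsCycleSeq G k c) {D : Set V}
    (heven : ∀ i, 2 * i < k → c (2 * i) ∈ activationClosure G (fun _ => 2) D) :
    Set.range c ⊆ activationClosure G (fun _ => 2) D := by
  have hk := hc.three_le
  rintro _ ⟨j, rfl⟩
  rw [← hc.apply_mod j]
  have hjk : j % k < k := Nat.mod_lt j (by omega)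
  obtain ⟨i, hi | hi⟩ := Nat.even_or_odd' (j % k)
  · rw [hi] at hjk ⊢
    exact heven i hjk
  rw [hi] at hjk ⊢
  rcases Nat.lt_or_ge (2 * i + 2) k with hnext | hlast
  · refine mem_activationClosure_of_adj (hc.adj (2 * i)).symm (hc.adj (2 * i + 1)) (fun h => ?_)
      (heven i (by omega)) (heven (i + 1) (by omega))
    have := hc.injOn (by simp; omega) (by simp; omega) h
    omega
  · have hk' : 2 * i + 1 + 1 = k := by omega
    have hlastAdj := hc.adj (2 * i + 1)
    rw [hk', ← hc.apply_mod k, Nat.mod_self] at hlastAdj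
    refine mem_activationClosure_of_adj (hc.adj (2 * i)).symm hlastAdj (fun h => ?_)
      (heven i (by omega)) (heven 0 (by omega))
    have := hc.injOn (by simp; omega) (by simp; omega) h
    omega

lemma isHalfSeedable_range_of_even (hc : IsCycleSeq G k c) (hk : Even k) (S : Set V) :
    IsHalfSeedable G S (Set.range c) := by
  obtain ⟨m, rfl⟩ := hk
  refine ⟨(fun i => c (2 * i)) '' Set.Iio m, ?_,
    hc.range_subset_activationClosure fun i hi => ?_, ?_⟩
  · rintro _ ⟨i, -, rfl⟩
    exact ⟨_, rfl⟩
  · exact subset_activationClosure G _ _ (Or.inr ⟨i, by simp; omega, rfl⟩)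
  · rw [hc.ncard_range]
    have := Set.ncard_image_le (f := fun i => c (2 * i)) (Set.finite_Iio m)
    simp only [Set.ncard_Iio_nat] at this
    omega

/-- Seed `w` and `c 2, c 4, …, c (k - 1)`: then `c 0` becomes active, and the rest follows. -/
lemma isHalfSeedable_insert_of_odd (hc : IsCycleSeq G k c) (hk : Odd k) {w : V}
    (hw : G.Adj (c 0) w) (hwc : w ∉ Set.range c) (S : Set V) :
    IsHalfSeedable G S (insert w (Set.range c)) := by
  have h3 := hc.three_le
  obtain ⟨m, rfl⟩ := hk
  set D := insert w ((fun i => c (2 * i + 2)) '' Set.Iio m)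
  have hD : D ⊆ activationClosure G (fun _ => 2) (S ∪ D) :=
    Set.subset_union_right.trans (subset_activationClosure G _ _)
  have hc0 : c 0 ∈ activationClosure G (fun _ => 2) (S ∪ D) := by
    have hlast := hc.adj (2 * m)
    rw [← hc.apply_mod (2 * m + 1), Nat.mod_self] at hlast
    refine mem_activationClosure_of_adj hw hlast.symm (fun h => hwc ⟨_, h.symm⟩)
      (hD (Or.inl rfl)) (hD (Or.inr ⟨m - 1, by simp; omega, congrArg c (by omega)⟩))
  refine ⟨D, Set.insert_subset_insert ?_, Set.insert_subset (hD (Or.inl rfl))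
    (hc.range_subset_activationClosure fun i hi => ?_), ?_⟩
  · rintro _ ⟨i, -, rfl⟩
    exact ⟨_, rfl⟩
  · rcases i with _ | i
    · exact hc0
    · exact hD (Or.inr ⟨i, by simp; omega, rfl⟩)
  · rw [Set.ncard_insert_of_notMem hwc, hc.ncard_range]
    have := Set.ncard_image_le (f := fun i => c (2 * i + 2)) (Set.finite_Iio m)
    have : D.ncard ≤ _ := Set.ncard_insert_le _ _
    simp only [Set.ncard_Iio_nat] at *
    omega

end IsCycleSeq

end Seeds

section Greedy

variable [Finite V]

lemma exists_isHalfSeedable_of_isAdjClosed (hmin : ∀ v : V, 2 ≤ (G.neighborSet v).ncard)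
    (hodd : ∀ C : G.ConnectedComponent,
      ¬ (Odd C.supp.ncard ∧ ∀ v ∈ C.supp, (G.neighborSet v).ncard = 2))
    {R : Set V} (hR : IsAdjClosed G R) (hne : R.Nonempty) (S : Set V) :
    ∃ A ⊆ R, A.Nonempty ∧ IsHalfSeedable G S A := by
  classical
  have hex : ∃ k c, IsCycleSeq G k c ∧ ∀ i, c i ∈ R :=
    exists_isCycleSeq hR (fun v _ => hmin v) hne
  obtain ⟨c, hc, hcR⟩ := Nat.find_spec hex
  have hshort : ∀ k' c', IsCycleSeq G k' c' → (∀ i, c' i ∈ R) → Nat.find hex ≤ k' :=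
    fun k' c' hc' hc'R => Nat.find_min' hex ⟨c', hc', hc'R⟩
  have hcycR : Set.range c ⊆ R := Set.range_subset_iff.2 hcR
  rcases Nat.even_or_odd (Nat.find hex) with hk | hk
  · exact ⟨_, hcycR, Set.range_nonempty c, hc.isHalfSeedable_range_of_even hk S⟩
  by_cases hclosed : IsAdjClosed G (Set.range c)
  · refine absurd ⟨?_, ?_⟩ (hodd (G.connectedComponentMk (c 0)))
    · rwa [hc.supp_connectedComponentMk_eq_range hclosed, hc.ncard_range]
    · rw [hc.supp_connectedComponentMk_eq_range hclosed]
      rintro _ ⟨i, rfl⟩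
      exact hc.ncard_neighborSet hcR hshort hclosed i
  simp only [IsAdjClosed, not_forall] at hclosed
  obtain ⟨_, w, ⟨i, rfl⟩, hw, hwc⟩ := hclosed
  refine ⟨insert w (Set.range c), Set.insert_subset (hR (hcR i) hw) hcycR,
    Set.insert_nonempty _ _, ?_⟩
  simpa [hc.range_rotate i] using
    (hc.rotate i).isHalfSeedable_insert_of_odd hk (by simpa using hw)
      (by rwa [hc.range_rotate i]) S

lemma exists_isHalfSeedable (hmin : ∀ v : V, 2 ≤ (G.neighborSet v).ncard)
    (hodd : ∀ C : G.ConnectedComponent,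
      ¬ (Odd C.supp.ncard ∧ ∀ v ∈ C.supp, (G.neighborSet v).ncard = 2))
    {S : Set V} (hS : activationStep G (fun _ => 2) S ⊆ S) (hSu : S ≠ Set.univ) :
    ∃ A, A.Nonempty ∧ Disjoint S A ∧ IsHalfSeedable G S A := by
  by_cases hpair : ∃ w u v, w ∉ S ∧ u ∈ S ∧ v ∉ S ∧ G.Adj w u ∧ G.Adj w v
  · obtain ⟨w, u, v, hw, hu, hv, hwu, hwv⟩ := hpair
    refine ⟨{v, w}, Set.insert_nonempty _ _, ?_, isHalfSeedable_pair hwu hu hwv hv⟩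
    rw [Set.disjoint_insert_right, Set.disjoint_singleton_right]
    exact ⟨hv, hw⟩
  have hR : IsAdjClosed G Sᶜ := by
    intro w u hw hwu
    by_contra hu
    have hnbr : ¬ G.neighborSet w ⊆ S := fun hsub =>
      hw (hS (Or.inr ((hmin w).trans_eq (by rw [Set.inter_eq_left.2 hsub]))))
    obtain ⟨v, hwv, hv⟩ := Set.not_subset.1 hnbr
    exact hpair ⟨w, u, v, hw, not_not.1 hu, hv, hwu, hwv⟩
  obtain ⟨A, hAR, hAne, hA⟩ :=
    exists_isHalfSeedable_of_isAdjClosed hmin hodd hR (Set.nonempty_compl.2 hSu) S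
  exact ⟨A, hAne, disjoint_compl_right.mono_right hAR, hA⟩

lemma exists_ssubset_activationClosure (hmin : ∀ v : V, 2 ≤ (G.neighborSet v).ncard)
    (hodd : ∀ C : G.ConnectedComponent,
      ¬ (Odd C.supp.ncard ∧ ∀ v ∈ C.supp, (G.neighborSet v).ncard = 2))
    {D : Set V} (hD : 2 * D.ncard ≤ (activationClosure G (fun _ => 2) D).ncard)
    (hDu : activationClosure G (fun _ => 2) D ≠ Set.univ) :
    ∃ D', activationClosure G (fun _ => 2) D ⊂ activationClosure G (fun _ => 2) D' ∧
      2 * D'.ncard ≤ (activationClosure G (fun _ => 2) D').ncard := by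
  set S := activationClosure G (fun _ => 2) D
  obtain ⟨A, ⟨a, ha⟩, hSA, D₁, -, hAcl, hD₁⟩ :=
    exists_isHalfSeedable hmin hodd (activationStep_activationClosure D) hDu
  have hS : S ⊆ activationClosure G (fun _ => 2) (D ∪ D₁) :=
    activationClosure_mono Set.subset_union_left
  have hA : A ⊆ activationClosure G (fun _ => 2) (D ∪ D₁) :=
    hAcl.trans <| activationClosure_subset_activationClosure <| Set.union_subset hS <|
      Set.subset_union_right.trans (subset_activationClosure G _ _)
  refine ⟨D ∪ D₁,
    Set.ssubset_iff_of_subset hS |>.2 ⟨a, hA ha, hSA.notMem_of_mem_right ha⟩, ?_⟩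
  calc 2 * (D ∪ D₁).ncard ≤ 2 * D.ncard + 2 * D₁.ncard := by
        have := Set.ncard_union_le D D₁; omega
    _ ≤ S.ncard + A.ncard := by omega
    _ = (S ∪ A).ncard := (Set.ncard_union_eq hSA).symm
    _ ≤ _ := Set.ncard_le_ncard (Set.union_subset hS hA)

theorem exists_activationClosure_eq_univ (hmin : ∀ v : V, 2 ≤ (G.neighborSet v).ncard)
    (hodd : ∀ C : G.ConnectedComponent,
      ¬ (Odd C.supp.ncard ∧ ∀ v ∈ C.supp, (G.neighborSet v).ncard = 2))
    (D : Set V) (hD : 2 * D.ncard ≤ (activationClosure G (fun _ => 2) D).ncard) :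
    ∃ D', activationClosure G (fun _ => 2) D' = Set.univ ∧ 2 * D'.ncard ≤ Nat.card V := by
  by_cases hDu : activationClosure G (fun _ => 2) D = Set.univ
  · exact ⟨D, hDu, by rwa [hDu, Set.ncard_univ] at hD⟩
  obtain ⟨D', hlt, hD'⟩ := exists_ssubset_activationClosure hmin hodd hD hDu
  exact exists_activationClosure_eq_univ hmin hodd D' hD'
termination_by (activationClosure G (fun _ => 2) D)ᶜ.ncard
decreasing_by exact Set.ncard_lt_ncard (compl_lt_compl_iff_lt.2 hlt)

end Greedy

end

/-- If `G` has minimum degree at least `2`, no connected component of `G` is an odd cycle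
(i.e. no component has odd order with all its vertices of degree `2` in `G`), and every
vertex has threshold `2`, then `G` has a dynamic monopoly of size at most `n/2`. -/
theorem stmt6 {V : Type*} [Fintype V] (G : SimpleGraph V)
    (hmin : ∀ v : V, 2 ≤ (G.neighborSet v).ncard)
    (hodd : ∀ C : G.ConnectedComponent,
      ¬ (Odd C.supp.ncard ∧ ∀ v ∈ C.supp, (G.neighborSet v).ncard = 2)) :
    ∃ D : Set V, IsDynamo G (fun _ => 2) D ∧ 2 * D.ncard ≤ Fintype.card V := by
  obtain ⟨D, hD, hcard⟩ := exists_activationClosure_eq_univ hmin hodd ∅ (by simp)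
  rw [Nat.card_eq_fintype_card] at hcard
  exact ⟨D, isDynamo_of_activationClosure_eq_univ hD, hcard⟩
end

section
/- The minimum size of a dynamic monopoly of the generalized Petersen graph GP(n,k) (with gcd(n,k) = 1, k ≤ n−2), where every vertex has threshold 2, equals ⌈(n+1)/2⌉. -/
open SimpleGraph

/-- The generalized Petersen graph `GP(n,k)`: outer vertices `inl i` forming an `n`-cycle,
inner vertices `inr i` joined when indices differ by `±k (mod n)`, and spokes `aᵢbᵢ`. -/
def genPetersen (n k : ℕ) : SimpleGraph (Fin n ⊕ Fin n) :=
  SimpleGraph.fromRel (fun x y =>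
    match x, y with
    | Sum.inl i, Sum.inl j => ((j : ℕ) : ZMod n) = ((i : ℕ) : ZMod n) + 1
    | Sum.inr i, Sum.inr j => ((j : ℕ) : ZMod n) = ((i : ℕ) : ZMod n) + (k : ZMod n)
    | Sum.inl i, Sum.inr j => i = j
    | Sum.inr _, Sum.inl _ => False)

open Sum Set
namespace GP8
variable {n k : ℕ}
def ι (i : Fin n) : ZMod n := ((i : ℕ) : ZMod n)
def ζ [NeZero n] (z : ZMod n) : Fin n := ⟨z.val, z.val_lt⟩
lemma ι_ζ [NeZero n] (z : ZMod n) : ι (ζ z) = z := ZMod.natCast_rightInverse z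
lemma ζ_ι [NeZero n] (i : Fin n) : ζ (ι i) = i := by
  ext; simp [ζ, ι, ZMod.val_natCast_of_lt i.isLt]
lemma ι_inj [NeZero n] {i j : Fin n} (h : ι i = ι j) : i = j := by
  have := congrArg (ζ (n := n)) h; rwa [ζ_ι, ζ_ι] at this
lemma eq_ζ_iff [NeZero n] {i : Fin n} {z : ZMod n} : i = ζ z ↔ ι i = z := by
  constructor
  · rintro rfl; exact ι_ζ z
  · intro h; rw [← h, ζ_ι]
lemma one_ne (hn : 3 ≤ n) : (1 : ZMod n) ≠ 0 := by
  have : ((1 : ℕ) : ZMod n) ≠ 0 := by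
    rw [Ne, ZMod.natCast_eq_zero_iff]
    intro h; have := Nat.le_of_dvd one_pos h; omega
  simpa using this
lemma two_ne (hn : 3 ≤ n) : (2 : ZMod n) ≠ 0 := by
  have : ((2 : ℕ) : ZMod n) ≠ 0 := by
    rw [Ne, ZMod.natCast_eq_zero_iff]
    intro h; have := Nat.le_of_dvd two_pos h; omega
  simpa using this
lemma k_ne (hn : 3 ≤ n) (hgcd : Nat.gcd n k = 1) : (k : ZMod n) ≠ 0 := by
  rw [Ne, ZMod.natCast_eq_zero_iff]
  intro h
  have h1 : n ∣ 1 := hgcd ▸ Nat.dvd_gcd dvd_rfl h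
  have := Nat.le_of_dvd one_pos h1; omega
lemma twok_ne (hn : 3 ≤ n) (hgcd : Nat.gcd n k = 1) :
    (k : ZMod n) + (k : ZMod n) ≠ 0 := by
  have : ((k + k : ℕ) : ZMod n) ≠ 0 := by
    rw [Ne, ZMod.natCast_eq_zero_iff]
    intro h
    have h2 : n ∣ 2 * k := by rwa [two_mul]
    have hcop : Nat.Coprime n k := hgcd
    have := Nat.Coprime.dvd_of_dvd_mul_right hcop h2
    have := Nat.le_of_dvd two_pos this; omega
  push_cast at this
  exact this

section nbhd
variable [NeZero n] (hn : 3 ≤ n)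

lemma nbhd_outer (hn : 3 ≤ n) (i : Fin n) :
    (genPetersen n k).neighborSet (inl i) =
      {inl (ζ (ι i + 1)), inl (ζ (ι i - 1)), inr i} := by
  ext x
  cases x with
  | inl j =>
      simp only [SimpleGraph.mem_neighborSet, genPetersen, SimpleGraph.fromRel_adj,
        mem_insert_iff, mem_singleton_iff, inl.injEq, ne_eq, reduceCtorEq, or_false]
      constructor
      · rintro ⟨hne, h | h⟩
        · left; rw [eq_ζ_iff]; exact h
        · right; rw [eq_ζ_iff, eq_sub_iff_add_eq]; exact h.symm
      · rintro (h | h)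
        · rw [eq_ζ_iff] at h
          refine ⟨fun he => ?_, Or.inl h⟩
          subst he
          exact one_ne hn (by linear_combination -h)
        · rw [eq_ζ_iff, eq_sub_iff_add_eq] at h
          refine ⟨fun he => ?_, Or.inr h.symm⟩
          subst he
          exact one_ne hn (by linear_combination h)
  | inr j =>
      simp only [SimpleGraph.mem_neighborSet, genPetersen, SimpleGraph.fromRel_adj,
        mem_insert_iff, mem_singleton_iff, inr.injEq, ne_eq, reduceCtorEq, false_or]
      constructor
      · rintro ⟨-, h | h⟩
        · exact h.symm ▸ rfl
        · exact h.elim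
      · rintro rfl; exact ⟨by simp, Or.inl rfl⟩

lemma nbhd_inner (hn : 3 ≤ n) (hgcd : Nat.gcd n k = 1) (i : Fin n) :
    (genPetersen n k).neighborSet (inr i) =
      {inr (ζ (ι i + (k : ZMod n))), inr (ζ (ι i - (k : ZMod n))), inl i} := by
  ext x
  cases x with
  | inr j =>
      simp only [SimpleGraph.mem_neighborSet, genPetersen, SimpleGraph.fromRel_adj,
        mem_insert_iff, mem_singleton_iff, inr.injEq, ne_eq, reduceCtorEq, or_false]
      constructor
      · rintro ⟨hne, h | h⟩
        · left; rw [eq_ζ_iff]; exact h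
        · right; rw [eq_ζ_iff, eq_sub_iff_add_eq]; exact h.symm
      · rintro (h | h)
        · rw [eq_ζ_iff] at h
          refine ⟨fun he => ?_, Or.inl h⟩
          subst he
          exact k_ne hn hgcd (by linear_combination -h)
        · rw [eq_ζ_iff, eq_sub_iff_add_eq] at h
          refine ⟨fun he => ?_, Or.inr h.symm⟩
          subst he
          exact k_ne hn hgcd (by linear_combination h)
  | inl j =>
      simp [genPetersen, SimpleGraph.fromRel_adj, eq_comm]

lemma deg_three (hn : 3 ≤ n) (hgcd : Nat.gcd n k = 1) (v : Fin n ⊕ Fin n) :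
    ((genPetersen n k).neighborSet v).ncard = 3 := by
  cases v with
  | inl i =>
      rw [nbhd_outer hn i, Set.ncard_eq_three]
      refine ⟨_, _, _, ?_, by simp, by simp, rfl⟩
      simp only [ne_eq, inl.injEq]
      intro h
      have h2 := congrArg ι h
      rw [ι_ζ, ι_ζ] at h2
      exact two_ne hn (by linear_combination h2)
  | inr i =>
      rw [nbhd_inner hn hgcd i, Set.ncard_eq_three]
      refine ⟨_, _, _, ?_, by simp, by simp, rfl⟩
      simp only [ne_eq, inr.injEq]
      intro h
      have h2 := congrArg ι h
      rw [ι_ζ, ι_ζ] at h2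
      exact twok_ne hn hgcd (by linear_combination h2)

end nbhd

section iterlem
variable {V : Type*} [Finite V] {G : SimpleGraph V} {τ : V → ℕ} {D : Set V}

lemma subset_step (A : Set V) : A ⊆ activationStep G τ A := Set.subset_union_left

lemma iter_mono (D : Set V) {i j : ℕ} (h : i ≤ j) :
    (activationStep G τ)^[i] D ⊆ (activationStep G τ)^[j] D := by
  induction j with
  | zero => simp_all
  | succ m ih =>
      rcases Nat.lt_or_ge i (m+1) with h'|h'
      · refine (ih (by omega)).trans ?_
        rw [Function.iterate_succ_apply']
        exact subset_step _
      · have : i = m + 1 := by omega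
        subst this; rfl

lemma mem_iter_succ_of_two {m : ℕ} {u w v : V}
    (hu : u ∈ (activationStep G τ)^[m] D) (hw : w ∈ (activationStep G τ)^[m] D)
    (huw : u ≠ w) (hau : G.Adj v u) (haw : G.Adj v w) (hτ : τ v ≤ 2) :
    v ∈ (activationStep G τ)^[m+1] D := by
  rw [Function.iterate_succ_apply']
  right
  have hsub : {u, w} ⊆ G.neighborSet v ∩ (activationStep G τ)^[m] D := by
    rintro x (rfl | rfl)
    · exact ⟨hau, hu⟩
    · exact ⟨haw, hw⟩
  have h2 : 2 ≤ (G.neighborSet v ∩ (activationStep G τ)^[m] D).ncard := by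
    rw [← Set.ncard_pair huw]
    exact Set.ncard_le_ncard hsub (Set.toFinite _)
  exact le_trans hτ h2

end iterlem

set_option linter.unusedSectionVars false

section Upper
variable {n k : ℕ} [NeZero n]

lemma adj_spoke (i : Fin n) : (genPetersen n k).Adj (inl i) (inr i) := by
  simp [genPetersen, SimpleGraph.fromRel_adj]

lemma adj_outer (hn : 3 ≤ n) {i j : Fin n} (h : ι j = ι i + 1) :
    (genPetersen n k).Adj (inl i) (inl j) := by
  rw [genPetersen, SimpleGraph.fromRel_adj]
  refine ⟨fun he => ?_, Or.inl h⟩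
  rw [inl.injEq] at he; subst he
  exact one_ne hn (by linear_combination -h)

lemma adj_inner (hn : 3 ≤ n) (hgcd : Nat.gcd n k = 1) {i j : Fin n}
    (h : ι j = ι i + (k : ZMod n)) : (genPetersen n k).Adj (inr i) (inr j) := by
  rw [genPetersen, SimpleGraph.fromRel_adj]
  refine ⟨fun he => ?_, Or.inl h⟩
  rw [inr.injEq] at he; subst he
  exact k_ne hn hgcd (by linear_combination -h)

/-- the seed set -/
def seed (n : ℕ) [NeZero n] : Set (Fin n ⊕ Fin n) :=
  (inl '' {i : Fin n | i.val % 2 = 1}) ∪ {inr (ζ 0)}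

local notation "iter" => fun (j : ℕ) => (activationStep (genPetersen n k) (fun _ => 2))^[j] (seed n)

section dyn
variable (hn : 3 ≤ n) (hgcd : Nat.gcd n k = 1)

lemma seed_sub (j : ℕ) : seed n ⊆ iter j := iter_mono _ (Nat.zero_le j)

lemma odd_mem {i : Fin n} (h : i.val % 2 = 1) (j : ℕ) : inl i ∈ iter j :=
  seed_sub j (Or.inl ⟨i, h, rfl⟩)

lemma z0_mem (j : ℕ) : (inr (ζ 0) : Fin n ⊕ Fin n) ∈ iter j :=
  seed_sub j (Or.inr rfl)

lemma ι_mk {m : ℕ} (h : m < n) : ι (⟨m, h⟩ : Fin n) = ((m : ℕ) : ZMod n) := rfl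

lemma zero_iter1 (hn : 3 ≤ n) {i : Fin n} (h : i.val = 0) : inl i ∈ iter 1 := by
  haveI : Fact (1 < n) := ⟨by omega⟩
  have hι : ι i = 0 := by
    rw [show i = (⟨0, by omega⟩ : Fin n) from Fin.ext h, ι_mk]
    simp
  refine mem_iter_succ_of_two (u := inl (ζ (1 : ZMod n))) (w := inr i) ?_ ?_ ?_ ?_ ?_ le_rfl
  · exact odd_mem (by simp [ζ, ZMod.val_one]) 0
  · have : i = ζ 0 := by
      ext; simp [ζ, ZMod.val_zero, h]
    rw [this]; exact z0_mem 0
  · simp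
  · exact adj_outer hn (by rw [ι_ζ, hι, zero_add])
  · exact adj_spoke i

lemma outer_iter2 (hn : 3 ≤ n) (i : Fin n) : inl i ∈ iter 2 := by
  rcases Nat.lt_or_ge 0 (i.val % 2) with hodd | heven
  · exact odd_mem (by omega) 2
  have heven : i.val % 2 = 0 := by omega
  rcases Nat.eq_zero_or_pos i.val with h0 | hpos
  · exact iter_mono _ (by omega) (zero_iter1 hn h0)
  rcases Nat.lt_or_ge (i.val + 1) n with hlt | hge
  · -- interior even vertex
    have h1 : i.val - 1 < n := by omega
    refine mem_iter_succ_of_two (m := 1)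
      (u := inl (⟨i.val - 1, h1⟩ : Fin n)) (w := inl (⟨i.val + 1, hlt⟩ : Fin n))
      ?_ ?_ ?_ ?_ ?_ le_rfl
    · exact odd_mem (by show (i.val - 1) % 2 = 1; omega) 1
    · exact odd_mem (by show (i.val + 1) % 2 = 1; omega) 1
    · simp only [ne_eq, inl.injEq, Fin.mk.injEq]; omega
    · refine (adj_outer hn ?_).symm
      have h := congrArg (Nat.cast : ℕ → ZMod n) (show i.val = (i.val - 1) + 1 by omega)
      push_cast at h
      exact h
    · refine adj_outer hn ?_
      have h : ((i.val + 1 : ℕ) : ZMod n) = ((i.val : ℕ) : ZMod n) + 1 := by push_cast; ring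
      exact h
  · -- i.val = n - 1, n odd
    have hival : i.val = n - 1 := by have := i.isLt; omega
    have h1 : i.val - 1 < n := by omega
    refine mem_iter_succ_of_two (m := 1)
      (u := inl (⟨i.val - 1, h1⟩ : Fin n)) (w := inl (⟨0, by omega⟩ : Fin n))
      ?_ ?_ ?_ ?_ ?_ le_rfl
    · exact odd_mem (by show (i.val - 1) % 2 = 1; omega) 1
    · exact zero_iter1 hn rfl
    · simp only [ne_eq, inl.injEq, Fin.mk.injEq]; omega
    · refine (adj_outer hn ?_).symm
      have h := congrArg (Nat.cast : ℕ → ZMod n) (show i.val = (i.val - 1) + 1 by omega)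
      push_cast at h
      exact h
    · refine adj_outer hn ?_
      have h : ((0 : ℕ) : ZMod n) = ((i.val : ℕ) : ZMod n) + 1 := by
        have h2 := congrArg (Nat.cast : ℕ → ZMod n) (show n = i.val + 1 by omega)
        rw [ZMod.natCast_self] at h2
        push_cast at h2
        linear_combination h2
      exact h

/-- the inner cycle walker -/
def cyc (n k : ℕ) [NeZero n] (j : ℕ) : Fin n := ζ ((j * k : ℕ) : ZMod n)

lemma cyc_iter (hn : 3 ≤ n) (hgcd : Nat.gcd n k = 1) (j : ℕ) :
    inr (cyc n k j) ∈ iter (j + 2) := by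
  induction j with
  | zero =>
      have : cyc n k 0 = ζ 0 := by simp [cyc]
      rw [this]; exact z0_mem 2
  | succ m ih =>
      refine mem_iter_succ_of_two (m := m + 2)
        (u := inl (cyc n k (m+1))) (w := inr (cyc n k m)) ?_ ih ?_ ?_ ?_ le_rfl
      · exact iter_mono _ (by omega) (outer_iter2 hn (cyc n k (m+1)))
      · simp
      · exact (adj_spoke _).symm
      · refine (adj_inner hn hgcd ?_).symm
        rw [cyc, cyc, ι_ζ, ι_ζ]
        push_cast; ring

lemma cyc_surj (hgcd : Nat.gcd n k = 1) (i : Fin n) : ∃ j < n, cyc n k j = i := by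
  have hcop : Nat.Coprime k n := Nat.coprime_comm.mp hgcd
  set u := ZMod.unitOfCoprime k hcop with hu
  refine ⟨((ι i) * ((u⁻¹ : (ZMod n)ˣ) : ZMod n)).val, ZMod.val_lt _, ?_⟩
  rw [cyc]
  have h1 : (((((ι i) * ((u⁻¹ : (ZMod n)ˣ) : ZMod n)).val * k : ℕ)) : ZMod n) = ι i := by
    push_cast
    rw [ZMod.natCast_val, ZMod.cast_id]
    rw [show ((k : ZMod n)) = (u : ZMod n) from (ZMod.coe_unitOfCoprime k hcop).symm]
    exact Units.inv_mul_cancel_right _ _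
  rw [h1, ζ_ι]

lemma iter_univ (hn : 3 ≤ n) (hgcd : Nat.gcd n k = 1) : iter (n + 2) = Set.univ := by
  rw [Set.eq_univ_iff_forall]
  rintro (i | i)
  · exact iter_mono _ (by omega) (outer_iter2 hn i)
  · obtain ⟨j, hj, hcj⟩ := cyc_surj hgcd i
    rw [← hcj]
    exact iter_mono _ (by omega) (cyc_iter hn hgcd j)

lemma seed_dynamo (hn : 3 ≤ n) (hgcd : Nat.gcd n k = 1) :
    IsDynamo (genPetersen n k) (fun _ => 2) (seed n) :=
  ⟨n + 2, iter_univ hn hgcd⟩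

lemma card_odd_range (m : ℕ) : ((Finset.range m).filter (fun x => x % 2 = 1)).card = m / 2 := by
  induction m with
  | zero => simp
  | succ m ih =>
      rw [Finset.range_add_one, Finset.filter_insert]
      by_cases h : m % 2 = 1
      · rw [if_pos h, Finset.card_insert_of_notMem (by simp)]
        omega
      · rw [if_neg h]; omega

lemma seed_ncard : (seed n).ncard = n / 2 + 1 := by
  have hd : Disjoint (inl '' {i : Fin n | i.val % 2 = 1}) ({inr (ζ 0)} : Set (Fin n ⊕ Fin n)) := by
    simp [Set.disjoint_singleton_right]
  rw [seed, Set.ncard_union_eq hd (Set.toFinite _) (Set.toFinite _),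
    Set.ncard_singleton, Set.ncard_image_of_injective _ Sum.inl_injective]
  congr 1
  rw [Set.ncard_eq_toFinset_card', Set.toFinset_setOf]
  rw [← card_odd_range n]
  apply Finset.card_bij (fun i _ => i.val)
  · intro a ha; simp only [Finset.mem_filter, Finset.mem_univ, true_and] at ha
    simp only [Finset.mem_filter, Finset.mem_range]
    exact ⟨a.isLt, ha⟩
  · intro a _ b _ h; exact Fin.val_injective h
  · intro b hb; simp only [Finset.mem_filter, Finset.mem_range] at hb
    exact ⟨⟨b, hb.1⟩, by simp [hb.2], rfl⟩

end dyn
end Upper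

set_option maxHeartbeats 1000000

section Lower
variable {W : Type*} [Fintype W]

/-- ordered adjacent pairs inside `A` -/
def pairs (G : SimpleGraph W) (A : Set W) : Set (W × W) :=
  {p | G.Adj p.1 p.2 ∧ p.1 ∈ A ∧ p.2 ∈ A}

lemma pairs_mono (G : SimpleGraph W) {A B : Set W} (h : A ⊆ B) : pairs G A ⊆ pairs G B :=
  fun p hp => ⟨hp.1, h hp.2.1, h hp.2.2⟩

variable (G : SimpleGraph W) (A B : Set W)

lemma hex (hact : ∀ v ∈ B \ A, 2 ≤ (G.neighborSet v ∩ A).ncard) (v : W) (hv : v ∈ B \ A) :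
    ∃ a b, a ∈ G.neighborSet v ∩ A ∧ b ∈ G.neighborSet v ∩ A ∧ a ≠ b :=
  (Set.one_lt_ncard_iff (Set.toFinite _)).mp (lt_of_lt_of_le one_lt_two (hact v hv))

/-- choice of two distinct active neighbors -/
noncomputable def pick (hact : ∀ v ∈ B \ A, 2 ≤ (G.neighborSet v ∩ A).ncard)
    (v : W) (b : Bool) : W := by
  classical
  exact if hv : v ∈ B \ A then
    cond b (hex G A B hact v hv).choose (hex G A B hact v hv).choose_spec.choose
  else v

variable {G A B}

section pickfacts
variable (hact : ∀ v ∈ B \ A, 2 ≤ (G.neighborSet v ∩ A).ncard)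

lemma pick_mem {v : W} (hv : v ∈ B \ A) (b : Bool) :
    pick G A B hact v b ∈ G.neighborSet v ∩ A := by
  cases hb : b with
  | true =>
      simp only [pick, dif_pos hv, Bool.cond_true]
      exact (hex G A B hact v hv).choose_spec.choose_spec.1
  | false =>
      simp only [pick, dif_pos hv, Bool.cond_false]
      exact (hex G A B hact v hv).choose_spec.choose_spec.2.1

lemma pick_ne {v : W} (hv : v ∈ B \ A) :
    pick G A B hact v true ≠ pick G A B hact v false := by
  simp only [pick, dif_pos hv, Bool.cond_true, Bool.cond_false]
  exact (hex G A B hact v hv).choose_spec.choose_spec.2.2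

lemma pick_mem_A {v : W} (hv : v ∈ B \ A) (b : Bool) : pick G A B hact v b ∈ A :=
  (pick_mem hact hv b).2

lemma pick_adj {v : W} (hv : v ∈ B \ A) (b : Bool) : G.Adj v (pick G A B hact v b) :=
  (pick_mem hact hv b).1

/-- the packing of 4·|B∖A| ordered pairs -/
noncomputable def pack (x : ↥(B \ A) × Bool × Bool) : W × W :=
  cond x.2.2 (pick G A B hact (x.1 : W) x.2.1, (x.1 : W))
             ((x.1 : W), pick G A B hact (x.1 : W) x.2.1)

lemma pack_range (hAB : A ⊆ B) : Set.range (pack hact) ⊆ pairs G B \ pairs G A := by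
  rintro p ⟨⟨v, b, c⟩, rfl⟩
  have hm := pick_mem hact v.2 b
  have hvB : (v : W) ∈ B := v.2.1
  have hvA : (v : W) ∉ A := v.2.2
  have hAB' : pick G A B hact (v : W) b ∈ B := hAB hm.2
  cases c with
  | false =>
      exact ⟨⟨hm.1, hvB, hAB'⟩, fun hp => hvA hp.2.1⟩
  | true =>
      exact ⟨⟨hm.1.symm, hAB', hvB⟩, fun hp => hvA hp.2.2⟩

lemma pack_inj : Function.Injective (pack hact) := by
  rintro ⟨v, b, c⟩ ⟨v', b', c'⟩ heq
  have hvA : (v : W) ∉ A := v.2.2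
  have hv'A : (v' : W) ∉ A := v'.2.2
  have key : ∀ (x x' : ↥(B \ A)) (d d' : Bool),
      ((x : W), pick G A B hact (x : W) d) = ((x' : W), pick G A B hact (x' : W) d') →
      x = x' ∧ d = d' := by
    rintro x x' d d' h
    rw [Prod.mk.injEq] at h
    have hxx' : x = x' := Subtype.ext h.1
    subst hxx'
    refine ⟨rfl, ?_⟩
    by_contra hne
    have h2 := h.2
    cases d <;> cases d' <;> simp_all
    · exact pick_ne hact x.2 h2.symm
    · exact pick_ne hact x.2 h2
  cases c with
  | false => cases c' with
    | false =>
        obtain ⟨h1, h2⟩ := key v v' b b' heq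
        simp [h1, h2]
    | true =>
        exfalso
        rw [pack, pack] at heq
        simp only [Bool.cond_false, Bool.cond_true, Prod.mk.injEq] at heq
        exact hvA (heq.1 ▸ pick_mem_A hact v'.2 b')
  | true => cases c' with
    | false =>
        exfalso
        rw [pack, pack] at heq
        simp only [Bool.cond_false, Bool.cond_true, Prod.mk.injEq] at heq
        exact hv'A (heq.1.symm ▸ pick_mem_A hact v.2 b)
    | true =>
        have heq' : ((v : W), pick G A B hact (v : W) b) =
            ((v' : W), pick G A B hact (v' : W) b') := by
          rw [pack, pack] at heq
          simp only [Bool.cond_true, Prod.mk.injEq] at heq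
          rw [Prod.mk.injEq]
          exact ⟨heq.2, heq.1⟩
        obtain ⟨h1, h2⟩ := key v v' b b' heq'
        simp [h1, h2]

lemma pack_card : (Set.range (pack hact)).ncard = 4 * (B \ A).ncard := by
  rw [← Nat.card_coe_set_eq, Nat.card_range_of_injective (pack_inj hact),
    Nat.card_prod, Nat.card_prod, Nat.card_eq_fintype_card (α := Bool),
    Nat.card_coe_set_eq, Fintype.card_bool]
  ring

end pickfacts

lemma pairs_grow (hAB : A ⊆ B)
    (hact : ∀ v ∈ B \ A, 2 ≤ (G.neighborSet v ∩ A).ncard) :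
    (pairs G A).ncard + 4 * (B \ A).ncard ≤ (pairs G B).ncard := by
  have hdisj : Disjoint (pairs G A) (Set.range (pack hact)) :=
    Set.disjoint_left.mpr (fun p hp hpr => (pack_range hact hAB hpr).2 hp)
  have hsub : pairs G A ∪ Set.range (pack hact) ⊆ pairs G B :=
    Set.union_subset (pairs_mono G hAB) (fun p hp => (pack_range hact hAB hp).1)
  calc (pairs G A).ncard + 4 * (B \ A).ncard
      = (pairs G A ∪ Set.range (pack hact)).ncard := by
        rw [Set.ncard_union_eq hdisj (Set.toFinite _) (Set.toFinite _), pack_card]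
    _ ≤ (pairs G B).ncard := Set.ncard_le_ncard hsub (Set.toFinite _)

end Lower
section Lower2
variable {W : Type*} [Fintype W] {G : SimpleGraph W} {A : Set W}

lemma pairs_grow_final (hAuniv : A ≠ Set.univ)
    (hdeg : ∀ v, (G.neighborSet v).ncard = 3)
    (hact : ∀ v ∈ (Set.univ : Set W) \ A, 2 ≤ (G.neighborSet v ∩ A).ncard) :
    (pairs G A).ncard + 4 * ((Set.univ \ A : Set W)).ncard + 2 ≤ (pairs G Set.univ).ncard := by
  have hAB : A ⊆ Set.univ := Set.subset_univ A
  obtain ⟨v₀, hv₀⟩ : ∃ v₀, v₀ ∈ (Set.univ : Set W) \ A := by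
    by_contra h
    push_neg at h
    exact hAuniv (Set.eq_univ_of_forall fun x => by
      by_contra hx; exact (h x) ⟨trivial, hx⟩)
  have hpairsub : ({pick G A Set.univ hact v₀ true, pick G A Set.univ hact v₀ false} : Set W)
      ⊆ G.neighborSet v₀ := by
    rintro y (rfl | rfl)
    · exact (pick_mem hact hv₀ true).1
    · exact (pick_mem hact hv₀ false).1
  have hlt : ({pick G A Set.univ hact v₀ true, pick G A Set.univ hact v₀ false} : Set W).ncard
      < (G.neighborSet v₀).ncard := by
    rw [Set.ncard_pair (pick_ne hact hv₀), hdeg v₀]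
    omega
  obtain ⟨x, hxN, hxpick⟩ := Set.exists_mem_notMem_of_ncard_lt_ncard hlt (Set.toFinite _)
  have hxv₀ : v₀ ≠ x := (G.ne_of_adj hxN)
  have hv₀A : v₀ ∉ A := hv₀.2
  -- extra two pairs
  set p1 : W × W := (v₀, x) with hp1
  set p2 : W × W := (x, v₀) with hp2
  have hP1 : p1 ∈ pairs G Set.univ := ⟨hxN, trivial, trivial⟩
  have hP2 : p2 ∈ pairs G Set.univ := ⟨hxN.symm, trivial, trivial⟩
  have hp12 : p1 ≠ p2 := fun h => hxv₀ (congrArg Prod.fst h)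
  have hnotA1 : p1 ∉ pairs G A := fun h => hv₀A h.2.1
  have hnotA2 : p2 ∉ pairs G A := fun h => hv₀A h.2.2
  have hxne : ∀ b, x ≠ pick G A Set.univ hact v₀ b := by
    intro b h
    cases b
    · exact hxpick (Or.inr h)
    · exact hxpick (Or.inl h)
  have hnotR : ∀ p ∈ ({p1, p2} : Set (W × W)), p ∉ Set.range (pack hact) := by
    rintro p (rfl | rfl) ⟨⟨v, b, c⟩, hFeq⟩
    · -- p1 = (v₀, x)
      cases c with
      | false =>
          simp only [pack, Bool.cond_false, Prod.mk.injEq, hp1] at hFeq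
          exact hxne b (by rw [← hFeq.2, hFeq.1])
      | true =>
          simp only [pack, Bool.cond_true, Prod.mk.injEq, hp1] at hFeq
          exact hv₀A (hFeq.1 ▸ pick_mem_A hact v.2 b)
    · -- p2 = (x, v₀)
      cases c with
      | false =>
          simp only [pack, Bool.cond_false, Prod.mk.injEq, hp2] at hFeq
          exact hv₀A (hFeq.2 ▸ pick_mem_A hact v.2 b)
      | true =>
          simp only [pack, Bool.cond_true, Prod.mk.injEq, hp2] at hFeq
          exact hxne b (by rw [← hFeq.1, hFeq.2])
  have hdisj1 : Disjoint (pairs G A) (Set.range (pack hact)) :=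
    Set.disjoint_left.mpr (fun p hp hpr => (pack_range hact hAB hpr).2 hp)
  have hdisj2 : Disjoint (pairs G A ∪ Set.range (pack hact)) ({p1, p2} : Set (W × W)) := by
    rw [Set.disjoint_right]
    rintro p hp hpu
    rcases hpu with hpu | hpu
    · rcases hp with rfl | rfl
      · exact hnotA1 hpu
      · exact hnotA2 hpu
    · exact hnotR p hp hpu
  have hsub : (pairs G A ∪ Set.range (pack hact)) ∪ {p1, p2} ⊆ pairs G Set.univ := by
    refine Set.union_subset (Set.union_subset (pairs_mono G hAB)
      (fun p hp => (pack_range hact hAB hp).1)) ?_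
    rintro p (rfl | rfl)
    · exact hP1
    · exact hP2
  calc (pairs G A).ncard + 4 * ((Set.univ \ A : Set W)).ncard + 2
      = ((pairs G A ∪ Set.range (pack hact)) ∪ {p1, p2}).ncard := by
        rw [Set.ncard_union_eq hdisj2 (Set.toFinite _) (Set.toFinite _),
          Set.ncard_union_eq hdisj1 (Set.toFinite _) (Set.toFinite _),
          pack_card, Set.ncard_pair hp12]
    _ ≤ (pairs G Set.univ).ncard := Set.ncard_le_ncard hsub (Set.toFinite _)

lemma pairs_univ_ncard (hdeg : ∀ v, (G.neighborSet v).ncard = 3) :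
    (pairs G Set.univ).ncard = 3 * Fintype.card W := by
  classical
  have h1 : pairs G Set.univ = Set.range (fun d : G.Dart => d.toProd) := by
    ext p
    constructor
    · rintro ⟨hadj, -, -⟩
      exact ⟨⟨(p.1, p.2), hadj⟩, rfl⟩
    · rintro ⟨d, rfl⟩
      exact ⟨d.adj, trivial, trivial⟩
  rw [h1, ← Nat.card_coe_set_eq,
    Nat.card_range_of_injective SimpleGraph.Dart.toProd_injective,
    Nat.card_eq_fintype_card, SimpleGraph.dart_card_eq_sum_degrees]
  have hdeg' : ∀ v : W, G.degree v = 3 := by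
    intro v
    rw [← hdeg v, SimpleGraph.degree, SimpleGraph.neighborFinset,
      Set.ncard_eq_toFinset_card']
  rw [Finset.sum_congr rfl (fun v _ => hdeg' v)]
  simp [mul_comm]

lemma dynamo_lower [Nonempty W] (G : SimpleGraph W) (hdeg : ∀ v, (G.neighborSet v).ncard = 3)
    (D : Set W) (hD : IsDynamo G (fun _ => 2) D) : Fintype.card W + 2 ≤ 4 * D.ncard := by
  classical
  set τ : W → ℕ := fun _ => 2 with hτ
  have hstepact : ∀ A : Set W, ∀ v ∈ activationStep G τ A \ A,
      2 ≤ (G.neighborSet v ∩ A).ncard := by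
    rintro A v ⟨hv1 | hv1, hv2⟩
    · exact absurd hv1 hv2
    · exact hv1
  have chain : ∀ j : ℕ,
      4 * ((activationStep G τ)^[j] D).ncard + (pairs G D).ncard ≤
      4 * D.ncard + (pairs G ((activationStep G τ)^[j] D)).ncard := by
    intro j
    induction j with
    | zero => simp
    | succ m ih =>
        set A := (activationStep G τ)^[m] D with hA
        have hstep : (activationStep G τ)^[m+1] D = activationStep G τ A :=
          Function.iterate_succ_apply' _ _ _
        have hsub : A ⊆ activationStep G τ A := GP8.subset_step A
        have hgrow := pairs_grow hsub (hstepact A)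
        have hcard : (activationStep G τ A \ A).ncard + A.ncard =
            (activationStep G τ A).ncard :=
          Set.ncard_diff_add_ncard_of_subset hsub (Set.toFinite _)
        rw [hstep]
        omega
  obtain ⟨j, hj⟩ := hD
  have hex : ∃ j, (activationStep G τ)^[j] D = Set.univ := ⟨j, hj⟩
  set j₀ := Nat.find hex with hj₀def
  have hj₀ : (activationStep G τ)^[j₀] D = Set.univ := Nat.find_spec hex
  cases hj₀' : j₀ with
  | zero =>
      rw [hj₀'] at hj₀
      simp only [Function.iterate_zero_apply] at hj₀
      rw [hj₀, Set.ncard_univ, Nat.card_eq_fintype_card]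
      have := Fintype.card_pos (α := W)
      omega
  | succ m =>
      set A := (activationStep G τ)^[m] D with hA
      have hAne : A ≠ Set.univ := Nat.find_min hex (by omega)
      have hstep : (activationStep G τ)^[m+1] D = activationStep G τ A :=
        Function.iterate_succ_apply' _ _ _
      have hAuniv : activationStep G τ A = Set.univ := by
        rw [← hstep, ← hj₀']; exact hj₀
      have hact : ∀ v ∈ (Set.univ : Set W) \ A, 2 ≤ (G.neighborSet v ∩ A).ncard := by
        intro v hv
        exact hstepact A v (by rw [hAuniv]; exact hv)
      have hbonus := pairs_grow_final hAne hdeg hact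
      have hchain := chain m
      rw [← hA] at hchain
      have hcard : ((Set.univ : Set W) \ A).ncard + A.ncard = (Set.univ : Set W).ncard :=
        Set.ncard_diff_add_ncard_of_subset (Set.subset_univ A) (Set.toFinite _)
      have huniv : (Set.univ : Set W).ncard = Fintype.card W := by
        rw [Set.ncard_univ, Nat.card_eq_fintype_card]
      have hpu := pairs_univ_ncard hdeg
      omega

end Lower2
end GP8


/-- The minimum size of a dynamic monopoly of `GP(n,k)` (with `gcd(n,k) = 1`, `1 ≤ k ≤ n−2`)
with all thresholds equal to `2` is `⌈(n+1)/2⌉`. -/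
theorem stmt8 (n k : ℕ) (hk1 : 1 ≤ k) (hk2 : k ≤ n - 2) (hgcd : Nat.gcd n k = 1) :
    dyn (genPetersen n k) (fun _ => 2) = (n + 2) / 2 := by
  have hn : 3 ≤ n := by omega
  haveI : NeZero n := ⟨by omega⟩
  haveI : Nonempty (Fin n ⊕ Fin n) := ⟨Sum.inl ⟨0, by omega⟩⟩
  have hmem : (n / 2 + 1) ∈ {m : ℕ | ∃ D : Set (Fin n ⊕ Fin n), D.ncard = m ∧
      IsDynamo (genPetersen n k) (fun _ => 2) D} :=
    ⟨GP8.seed n, GP8.seed_ncard, GP8.seed_dynamo hn hgcd⟩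
  have hlb : ∀ m ∈ {m : ℕ | ∃ D : Set (Fin n ⊕ Fin n), D.ncard = m ∧
      IsDynamo (genPetersen n k) (fun _ => 2) D}, (n + 2) / 2 ≤ m := by
    rintro m ⟨D, rfl, hdyn⟩
    have h := GP8.dynamo_lower (genPetersen n k) (GP8.deg_three hn hgcd) D hdyn
    rw [Fintype.card_sum, Fintype.card_fin] at h
    omega
  have hne : {m : ℕ | ∃ D : Set (Fin n ⊕ Fin n), D.ncard = m ∧
      IsDynamo (genPetersen n k) (fun _ => 2) D}.Nonempty := ⟨_, hmem⟩
  rw [dyn]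
  refine le_antisymm ?_ (hlb _ (Nat.sInf_mem hne))
  have h2 : (n + 2) / 2 = n / 2 + 1 := by omega
  rw [h2]
  exact Nat.sInf_le hmem
end

section
/- Any dynamic monopoly of the line graph of the complete graph Kₙ, where every edge of Kₙ has threshold n − 2, has at least ⌊n²/8⌋ elements. -/
open SimpleGraph

namespace Dynamo13

/-- incidence of a vertex with an edge (ordered pair with fst < snd) -/
def inc (v : ℕ) (e : ℕ × ℕ) : Prop := e.1 = v ∨ e.2 = v

instance (v : ℕ) (e : ℕ × ℕ) : Decidable (inc v e) := by unfold inc; infer_instance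

/-- edge set of the complete graph on vertex finset S -/
def ES (S : Finset ℕ) : Finset (ℕ × ℕ) := (S ×ˢ S).filter (fun p => p.1 < p.2)

lemma mem_ES {S : Finset ℕ} {e : ℕ × ℕ} :
    e ∈ ES S ↔ e.1 ∈ S ∧ e.2 ∈ S ∧ e.1 < e.2 := by
  simp [ES, Finset.mem_filter, Finset.mem_product, and_assoc]

/-- edges at a vertex -/
def Nv (S : Finset ℕ) (v : ℕ) : Finset (ℕ × ℕ) := (ES S).filter (inc v)

lemma mem_Nv {S : Finset ℕ} {v : ℕ} {e : ℕ × ℕ} :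
    e ∈ Nv S v ↔ e ∈ ES S ∧ (e.1 = v ∨ e.2 = v) := by
  simp [Nv, Finset.mem_filter, inc]

/-- the edge joining two distinct vertices -/
def pairOf (u v : ℕ) : ℕ × ℕ := if u < v then (u, v) else (v, u)

lemma pairOf_mem {S : Finset ℕ} {u v : ℕ} (hu : u ∈ S) (hv : v ∈ S) (h : u ≠ v) :
    pairOf u v ∈ ES S := by
  rcases lt_or_gt_of_ne h with h' | h' <;>
    simp [pairOf, mem_ES, h', not_lt_of_gt, hu, hv]

lemma pairOf_inc_left (u v : ℕ) : inc u (pairOf u v) := by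
  unfold pairOf inc; split <;> simp

lemma pairOf_inc_right (u v : ℕ) : inc v (pairOf u v) := by
  unfold pairOf inc; split <;> simp

lemma eq_pairOf {S : Finset ℕ} {u v : ℕ} {e : ℕ × ℕ} (huv : u ≠ v)
    (he : e ∈ ES S) (h1 : inc u e) (h2 : inc v e) : e = pairOf u v := by
  rcases he with he
  rw [mem_ES] at he
  rcases h1 with h1 | h1 <;> rcases h2 with h2 | h2 <;> unfold pairOf <;>
    [skip; skip; skip; skip]
  · exact absurd (h1.symm.trans h2) huv
  · rw [if_pos (h1 ▸ h2 ▸ he.2.2)]; rw [← h1, ← h2]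
  · rw [if_neg (by rw [← h1, ← h2]; exact not_lt_of_gt he.2.2)]; rw [← h1, ← h2]
  · exact absurd (h1.symm.trans h2) huv

/-- the other endpoint -/
lemma exists_other {S : Finset ℕ} {v : ℕ} {e : ℕ × ℕ} (he : e ∈ Nv S v) :
    ∃ p ∈ S, p ≠ v ∧ inc p e ∧ e = pairOf v p := by
  rw [mem_Nv] at he
  obtain ⟨heS, hv⟩ := he
  rw [mem_ES] at heS
  rcases hv with hv | hv
  · refine ⟨e.2, heS.2.1, ?_, Or.inr rfl, ?_⟩
    · exact fun h => absurd (hv ▸ h ▸ heS.2.2) (lt_irrefl _)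
    · unfold pairOf; rw [if_pos (hv ▸ heS.2.2)]; rw [← hv]
  · refine ⟨e.1, heS.1, ?_, Or.inl rfl, ?_⟩
    · exact fun h => absurd (hv ▸ h ▸ heS.2.2) (lt_irrefl _)
    · unfold pairOf; rw [if_neg (by rw [← hv]; exact not_lt_of_gt heS.2.2)]; rw [← hv]

lemma Nv_card {S : Finset ℕ} {v : ℕ} (hv : v ∈ S) : (Nv S v).card = S.card - 1 := by
  have : (S.erase v).card = S.card - 1 := Finset.card_erase_of_mem hv
  rw [← this]
  apply Finset.card_bij (fun e _ => if e.1 = v then e.2 else e.1)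
  · intro e he
    rw [mem_Nv] at he
    obtain ⟨heS, hi⟩ := he
    rw [mem_ES] at heS
    rcases hi with h | h
    · rw [if_pos h]
      exact Finset.mem_erase.2 ⟨fun hh => absurd (h ▸ hh ▸ heS.2.2) (lt_irrefl _), heS.2.1⟩
    · by_cases h1 : e.1 = v
      · rw [if_pos h1]
        exact Finset.mem_erase.2 ⟨fun hh => absurd (h1 ▸ hh ▸ heS.2.2) (lt_irrefl _), heS.2.1⟩
      · rw [if_neg h1]
        exact Finset.mem_erase.2 ⟨h1, heS.1⟩
  · intro e he f hf hef
    obtain ⟨p, hp, hpv, hpi, hpe⟩ := exists_other he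
    obtain ⟨q, hq, hqv, hqi, hqe⟩ := exists_other hf
    have hep : (if e.1 = v then e.2 else e.1) = p := by
      rw [hpe]; unfold pairOf; split
      · simp
      · simp [hpv]
    have heq : (if f.1 = v then f.2 else f.1) = q := by
      rw [hqe]; unfold pairOf; split
      · simp
      · simp [hqv]
    rw [hep, heq] at hef
    rw [hpe, hqe, hef]
  · intro w hw
    rw [Finset.mem_erase] at hw
    refine ⟨pairOf v w, ?_, ?_⟩
    · rw [mem_Nv]
      have := pairOf_inc_left v w
      unfold inc at this
      exact ⟨pairOf_mem hv hw.2 (Ne.symm hw.1), this⟩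
    · unfold pairOf; split
      · simp
      · simp [hw.1]

section Counting

variable (σ : ℕ × ℕ → ℕ) (S : Finset ℕ)

/-- number of edges at `v` with time `≤ x` -/
def cnt (v : ℕ) (x : ℕ) : ℕ := ((Nv S v).filter (fun f => σ f ≤ x)).card

/-- position of edge `e` at vertex `v` (its rank in time among edges at `v`) -/
def pos (v : ℕ) (e : ℕ × ℕ) : ℕ := cnt σ S v (σ e)

variable {σ S}

lemma cnt_mono {v : ℕ} {x y : ℕ} (h : x ≤ y) : cnt σ S v x ≤ cnt σ S v y := by
  apply Finset.card_le_card
  intro f hf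
  rw [Finset.mem_filter] at hf ⊢
  exact ⟨hf.1, le_trans hf.2 h⟩

lemma cnt_step (hσ : Set.InjOn σ (ES S)) {v : ℕ} {x : ℕ} :
    cnt σ S v x ≤ cnt σ S v (x - 1) + 1 := by
  unfold cnt
  have hsub : (Nv S v).filter (fun f => σ f ≤ x) ⊆
      ((Nv S v).filter (fun f => σ f ≤ x - 1)) ∪ ((Nv S v).filter (fun f => σ f = x)) := by
    intro f hf
    rw [Finset.mem_filter] at hf
    rcases Nat.lt_or_ge (σ f) x with h | h
    · exact Finset.mem_union_left _ (Finset.mem_filter.2 ⟨hf.1, Nat.le_sub_one_of_lt h⟩)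
    · exact Finset.mem_union_right _ (Finset.mem_filter.2 ⟨hf.1, le_antisymm hf.2 h⟩)
  calc _ ≤ _ := Finset.card_le_card hsub
    _ ≤ _ := Finset.card_union_le _ _
    _ ≤ _ := by
        gcongr
        apply Finset.card_le_one.2
        intro a ha b hb
        rw [Finset.mem_filter] at ha hb
        exact hσ (mem_Nv.1 ha.1).1 (mem_Nv.1 hb.1).1 (ha.2.trans hb.2.symm)

variable (σ S) in
/-- the time at which vertex `v` acquires its `L`-th edge -/
noncomputable def reach (L : ℕ) (v : ℕ) : ℕ := sInf {x | L ≤ cnt σ S v x}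

lemma reach_spec {L v : ℕ} (hv : v ∈ S) (hL : L ≤ S.card - 1) :
    L ≤ cnt σ S v (reach σ S L v) := by
  have hne : {x | L ≤ cnt σ S v x}.Nonempty := by
    refine ⟨(Nv S v).sup σ, ?_⟩
    have : (Nv S v).filter (fun f => σ f ≤ (Nv S v).sup σ) = Nv S v := by
      apply Finset.filter_true_of_mem
      intro f hf
      exact Finset.le_sup hf
    simp only [Set.mem_setOf_eq, cnt, this]
    rw [Nv_card hv]; exact hL
  exact Nat.sInf_mem hne

lemma lt_reach {L v : ℕ} {x : ℕ} (h : x < reach σ S L v) : cnt σ S v x < L := by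
  by_contra hc
  exact absurd (Nat.sInf_le (by simpa using Nat.le_of_not_lt hc)) (Nat.not_le_of_lt h)

lemma reach_le_of_cnt {L v x : ℕ} (h : L ≤ cnt σ S v x) : reach σ S L v ≤ x :=
  Nat.sInf_le h

lemma cnt_reach_eq (hσ : Set.InjOn σ (ES S)) {L v : ℕ} (hv : v ∈ S)
    (hL : L ≤ S.card - 1) (hL1 : 1 ≤ L) :
    cnt σ S v (reach σ S L v) = L := by
  refine le_antisymm ?_ (reach_spec hv hL)
  rcases Nat.eq_zero_or_pos (reach σ S L v) with h0 | hpos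
  · -- reach = 0 : cnt v 0 ≤ 1 ≤ L
    rw [h0]
    calc cnt σ S v 0 ≤ 1 := by
          apply Finset.card_le_one.2
          intro a ha b hb
          rw [Finset.mem_filter] at ha hb
          exact hσ (mem_Nv.1 ha.1).1 (mem_Nv.1 hb.1).1
            ((Nat.le_zero.1 ha.2).trans (Nat.le_zero.1 hb.2).symm)
      _ ≤ L := hL1
  · calc cnt σ S v (reach σ S L v) ≤ cnt σ S v (reach σ S L v - 1) + 1 := cnt_step hσ
      _ ≤ (L - 1) + 1 := by
          gcongr
          exact Nat.le_sub_one_of_lt (lt_reach (Nat.sub_lt hpos one_pos))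
      _ = L := Nat.succ_pred_eq_of_pos hL1

lemma cnt_zero (hσ : Set.InjOn σ (ES S)) {v : ℕ} : cnt σ S v 0 ≤ 1 := by
  apply Finset.card_le_one.2
  intro a ha b hb
  rw [Finset.mem_filter] at ha hb
  exact hσ (mem_Nv.1 ha.1).1 (mem_Nv.1 hb.1).1
    ((Nat.le_zero.1 ha.2).trans (Nat.le_zero.1 hb.2).symm)

lemma pairOf_comm (u v : ℕ) (h : u ≠ v) : pairOf u v = pairOf v u := by
  rcases lt_or_gt_of_ne h with h' | h' <;> simp [pairOf, h', not_lt_of_gt, le_of_lt]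

variable (σ S) in
/-- validity: each edge outside `B` has position sum at least `θ + 2` -/
def Valid (θ : ℕ) (B : Finset (ℕ × ℕ)) : Prop :=
  ∀ e ∈ ES S, e ∉ B → θ + 2 ≤ pos σ S e.1 e + pos σ S e.2 e

lemma pos_sum_eq {v p : ℕ} {e : ℕ × ℕ} (he : e ∈ ES S) (hvp : v ≠ p)
    (hpe : e = pairOf v p) :
    pos σ S e.1 e + pos σ S e.2 e = pos σ S v e + pos σ S p e := by
  rcases lt_or_gt_of_ne hvp with h | h
  · rw [hpe]; unfold pairOf; rw [if_pos h]
  · rw [hpe]; unfold pairOf; rw [if_neg (not_lt_of_gt h)]; ring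

/-- Core lemma: a "good" early edge at `v` forces its partner to have reached
its `L`-th edge strictly earlier. -/
lemma core {B : Finset (ℕ × ℕ)} {θ L a : ℕ}
    (hσ : Set.InjOn σ (ES S)) (hval : Valid σ S θ B)
    {v : ℕ} {e : ℕ × ℕ} (he : e ∈ Nv S v) (heB : e ∉ B)
    (hup : pos σ S v e ≤ a) (haL : a + L + 1 ≤ θ + 2) (hL1 : 1 ≤ L) :
    ∃ p ∈ S, p ≠ v ∧ e = pairOf v p ∧ reach σ S L p < σ e := by
  obtain ⟨p, hpS, hpv, hpi, hpe⟩ := exists_other he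
  have heES : e ∈ ES S := (mem_Nv.1 he).1
  refine ⟨p, hpS, hpv, hpe, ?_⟩
  have hsum := hval e heES heB
  rw [pos_sum_eq heES (fun h => hpv h.symm) hpe] at hsum
  -- partner position is at least L + 1
  have hp_pos : L + 1 ≤ pos σ S p e := by omega
  -- hence cnt at σ e - 1 is at least L
  have h1 : L ≤ cnt σ S p (σ e - 1) := by
    have := cnt_step hσ (v := p) (x := σ e)
    unfold pos at hp_pos
    omega
  have hσe : 1 ≤ σ e := by
    by_contra h
    have h0 : σ e = 0 := by omega
    have := cnt_zero hσ (v := p)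
    unfold pos at hp_pos
    rw [h0] at hp_pos
    omega
  have := reach_le_of_cnt h1
  omega

/-- the set of edges at `v` arriving strictly before `v`'s `L`-th edge -/
noncomputable def lows (σ : ℕ × ℕ → ℕ) (S : Finset ℕ) (L v : ℕ) : Finset (ℕ × ℕ) :=
  (Nv S v).filter (fun e => σ e < reach σ S L v)

lemma exists_reach_edge (hσ : Set.InjOn σ (ES S)) {L v : ℕ} (hv : v ∈ S)
    (hL : L ≤ S.card - 1) (hL1 : 1 ≤ L) :
    ∃ e₀ ∈ Nv S v, σ e₀ = reach σ S L v := by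
  by_contra hc
  push_neg at hc
  have hcnt := cnt_reach_eq hσ hv hL hL1
  set r := reach σ S L v with hr
  have hsub : (Nv S v).filter (fun f => σ f ≤ r) ⊆ (Nv S v).filter (fun f => σ f ≤ r - 1) := by
    intro f hf
    rw [Finset.mem_filter] at hf ⊢
    refine ⟨hf.1, ?_⟩
    have := hc f hf.1
    omega
  have h1 : L ≤ cnt σ S v (r - 1) := by
    calc L = cnt σ S v r := hcnt.symm
      _ ≤ cnt σ S v (r-1) := Finset.card_le_card hsub
  rcases Nat.eq_zero_or_pos r with h0 | hpos
  · -- r = 0 : the filter σ f ≤ 0 with σ f ≠ 0 is empty, cnt = 0 < L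
    have : cnt σ S v r = 0 := by
      rw [h0]
      apply Finset.card_eq_zero.2
      apply Finset.filter_false_of_mem
      intro f hf
      have := hc f hf
      omega
    omega
  · exact absurd h1 (Nat.not_le_of_lt (lt_reach (by omega)))

lemma lows_card (hσ : Set.InjOn σ (ES S)) {L v : ℕ} (hv : v ∈ S)
    (hL : L ≤ S.card - 1) (hL1 : 1 ≤ L) :
    (lows σ S L v).card = L - 1 := by
  obtain ⟨e₀, he₀, hσe₀⟩ := exists_reach_edge hσ hv hL hL1
  have hcnt := cnt_reach_eq hσ hv hL hL1
  have hsplit : (Nv S v).filter (fun f => σ f ≤ reach σ S L v) = insert e₀ (lows σ S L v) := by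
    ext f
    simp only [Finset.mem_filter, Finset.mem_insert, lows]
    constructor
    · rintro ⟨hf, hfr⟩
      rcases Nat.lt_or_ge (σ f) (reach σ S L v) with h | h
      · exact Or.inr ⟨hf, h⟩
      · exact Or.inl (hσ (mem_Nv.1 hf).1 (mem_Nv.1 he₀).1 (by omega))
    · rintro (rfl | ⟨hf, hfr⟩)
      · exact ⟨he₀, le_of_eq hσe₀⟩
      · exact ⟨hf, le_of_lt hfr⟩
  have hnotmem : e₀ ∉ lows σ S L v := by
    simp only [lows, Finset.mem_filter]
    rintro ⟨-, h⟩
    omega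
  have : cnt σ S v (reach σ S L v) = (insert e₀ (lows σ S L v)).card := by
    rw [← hsplit]; rfl
  rw [Finset.card_insert_of_notMem hnotmem] at this
  omega

lemma lows_subset_Nv {L v : ℕ} : lows σ S L v ⊆ Nv S v := Finset.filter_subset _ _

lemma pos_lt_of_lows {L v : ℕ} {e : ℕ × ℕ} (he : e ∈ lows σ S L v) :
    pos σ S v e < L := by
  rw [lows, Finset.mem_filter] at he
  exact lt_reach he.2

/-- Single-vertex extraction: some vertex is incident to at least `m` bad edges. -/
lemma single_step {B : Finset (ℕ × ℕ)} {θ m : ℕ}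
    (hσ : Set.InjOn σ (ES S)) (hval : Valid σ S θ B)
    (hm1 : 1 ≤ m) (hm : 2 * m ≤ θ + 1) (hcard : m + 1 ≤ S.card) :
    ∃ u ∈ S, m ≤ (B.filter (inc u)).card := by
  have hS : S.Nonempty := Finset.card_pos.1 (by omega)
  obtain ⟨u, huS, hmin⟩ := S.exists_min_image (reach σ S m) hS
  have hmcard : m ≤ S.card - 1 := by omega
  refine ⟨u, huS, ?_⟩
  have hsub : (Nv S u).filter (fun f => σ f ≤ reach σ S m u) ⊆ B.filter (inc u) := by
    intro e he
    rw [Finset.mem_filter] at he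
    obtain ⟨heN, heσ⟩ := he
    rw [Finset.mem_filter]
    refine ⟨?_, (mem_Nv.1 heN).2.elim Or.inl Or.inr⟩
    by_contra heB
    have hup : pos σ S u e ≤ m := by
      calc pos σ S u e = cnt σ S u (σ e) := rfl
        _ ≤ cnt σ S u (reach σ S m u) := cnt_mono heσ
        _ = m := cnt_reach_eq hσ huS hmcard hm1
    obtain ⟨p, hpS, hpu, -, hreach⟩ := core hσ hval heN heB hup (by omega) hm1
    have := hmin p hpS
    omega
  calc m = cnt σ S u (reach σ S m u) := (cnt_reach_eq hσ huS hmcard hm1).symm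
    _ ≤ (B.filter (inc u)).card := Finset.card_le_card hsub

/-- Pair extraction: some pair of vertices is incident to at least `2ℓ` bad edges. -/
lemma pair_step {B : Finset (ℕ × ℕ)} {ℓ : ℕ}
    (hσ : Set.InjOn σ (ES S)) (hval : Valid σ S (2 * ℓ) B)
    (hl : 1 ≤ ℓ) (hcard : ℓ + 2 ≤ S.card) :
    ∃ u ∈ S, ∃ z ∈ S, u ≠ z ∧
      2 * ℓ ≤ (B.filter (fun e => inc u e ∨ inc z e)).card := by
  set L := ℓ + 1 with hLdef
  have hL1 : 1 ≤ L := by omega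
  have hLcard : L ≤ S.card - 1 := by omega
  have hS : S.Nonempty := Finset.card_pos.1 (by omega)
  obtain ⟨u, huS, hmin⟩ := S.exists_min_image (reach σ S L) hS
  -- all of u's lows are bad
  have hlowu : lows σ S L u ⊆ B := by
    intro e he
    by_contra heB
    have heN : e ∈ Nv S u := lows_subset_Nv he
    have hup : pos σ S u e ≤ ℓ := by
      have := pos_lt_of_lows he
      omega
    obtain ⟨p, hpS, hpu, -, hreach⟩ := core hσ hval heN heB hup (by omega) hL1
    have h1 : σ e < reach σ S L u := (Finset.mem_filter.1 he).2
    have := hmin p hpS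
    omega
  obtain ⟨e₀, he₀N, hσe₀⟩ := exists_reach_edge hσ huS hLcard hL1
  have hpos₀ : pos σ S u e₀ = L := by
    calc pos σ S u e₀ = cnt σ S u (σ e₀) := rfl
      _ = cnt σ S u (reach σ S L u) := by rw [hσe₀]
      _ = L := cnt_reach_eq hσ huS hLcard hL1
  have hlowcard : (lows σ S L u).card = ℓ := by
    have := lows_card hσ huS hLcard hL1
    omega
  by_cases he₀B : e₀ ∈ B
  · -- Case 1 : u's (ℓ+1)-st edge is bad as well; use u and the second minimizer w
    have hS' : (S.erase u).Nonempty := by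
      rw [← Finset.card_pos, Finset.card_erase_of_mem huS]
      omega
    obtain ⟨w, hwS', hminw⟩ := (S.erase u).exists_min_image (reach σ S L) hS'
    have hwS : w ∈ S := Finset.mem_of_mem_erase hwS'
    have hwu : w ≠ u := (Finset.mem_erase.1 hwS').1
    have hwlowcard : (lows σ S L w).card = ℓ := by
      have := lows_card hσ hwS hLcard hL1
      omega
    -- all of w's lows except possibly the edge to u are bad
    set A₂ := (lows σ S L w).erase (pairOf w u) with hA₂
    have hA₂B : A₂ ⊆ B := by
      intro e he
      by_contra heB
      have helow : e ∈ lows σ S L w := Finset.mem_of_mem_erase he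
      have heN : e ∈ Nv S w := lows_subset_Nv helow
      have hup : pos σ S w e ≤ ℓ := by
        have := pos_lt_of_lows helow
        omega
      obtain ⟨p, hpS, hpw, hpe, hreach⟩ := core hσ hval heN heB hup (by omega) hL1
      have h1 : σ e < reach σ S L w := (Finset.mem_filter.1 helow).2
      rcases eq_or_ne p u with rfl | hpu
      · exact (Finset.mem_erase.1 he).1 hpe
      · have := hminw p (Finset.mem_erase.2 ⟨hpu, hpS⟩)
        omega
    -- assemble: A₁ = insert e₀ (lows u), A₂
    set A₁ := insert e₀ (lows σ S L u) with hA₁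
    have hA₁B : A₁ ⊆ B := by
      intro e he
      rcases Finset.mem_insert.1 he with rfl | he
      · exact he₀B
      · exact hlowu he
    have hA₁card : ℓ + 1 ≤ A₁.card := by
      have : e₀ ∉ lows σ S L u := by
        simp only [lows, Finset.mem_filter]
        rintro ⟨-, h⟩
        omega
      rw [hA₁, Finset.card_insert_of_notMem this, hlowcard]
    have hA₂card : ℓ - 1 ≤ A₂.card := by
      have h1 : lows σ S L w ⊆ insert (pairOf w u) A₂ := by
        intro e he
        rcases eq_or_ne e (pairOf w u) with rfl | hne
        · exact Finset.mem_insert_self _ _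
        · exact Finset.mem_insert_of_mem (Finset.mem_erase.2 ⟨hne, he⟩)
      have := Finset.card_le_card h1
      have := Finset.card_insert_le (pairOf w u) A₂
      omega
    have hdisj : Disjoint A₁ A₂ := by
      rw [Finset.disjoint_left]
      intro e he₁ he₂
      have hNu : e ∈ Nv S u := by
        rcases Finset.mem_insert.1 he₁ with rfl | h
        · exact he₀N
        · exact lows_subset_Nv h
      have hNw : e ∈ Nv S w := lows_subset_Nv (Finset.mem_of_mem_erase he₂)
      have : e = pairOf w u :=
        eq_pairOf hwu (mem_Nv.1 hNu).1 (mem_Nv.1 hNw).2 (mem_Nv.1 hNu).2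
      exact (Finset.mem_erase.1 he₂).1 this
    refine ⟨u, huS, w, hwS, Ne.symm hwu, ?_⟩
    have hsub : A₁ ∪ A₂ ⊆ B.filter (fun e => inc u e ∨ inc w e) := by
      intro e he
      rcases Finset.mem_union.1 he with he | he
      · refine Finset.mem_filter.2 ⟨hA₁B he, Or.inl ?_⟩
        have : e ∈ Nv S u := by
          rcases Finset.mem_insert.1 he with rfl | h
          · exact he₀N
          · exact lows_subset_Nv h
        exact (mem_Nv.1 this).2
      · refine Finset.mem_filter.2 ⟨hA₂B he, Or.inr ?_⟩
        exact (mem_Nv.1 (lows_subset_Nv (Finset.mem_of_mem_erase he))).2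
    calc 2 * ℓ ≤ A₁.card + A₂.card := by omega
      _ = (A₁ ∪ A₂).card := (Finset.card_union_of_disjoint hdisj).symm
      _ ≤ _ := Finset.card_le_card hsub
  · -- Case 2 : u's (ℓ+1)-st edge is good; its partner z also has all lows bad
    obtain ⟨z, hzS, hzu, hzi, hze⟩ := exists_other he₀N
    have he₀ES : e₀ ∈ ES S := (mem_Nv.1 he₀N).1
    have hsum := hval e₀ he₀ES he₀B
    rw [pos_sum_eq he₀ES (fun h => hzu h.symm) hze] at hsum
    have hzpos : L ≤ pos σ S z e₀ := by omega
    have hzreach : reach σ S L z = σ e₀ := by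
      have h1 : reach σ S L z ≤ σ e₀ := reach_le_of_cnt hzpos
      have h2 := hmin z hzS
      omega
    have hlowz : lows σ S L z ⊆ B := by
      intro e he
      by_contra heB
      have heN : e ∈ Nv S z := lows_subset_Nv he
      have hup : pos σ S z e ≤ ℓ := by
        have := pos_lt_of_lows he
        omega
      obtain ⟨p, hpS, hpz, -, hreach⟩ := core hσ hval heN heB hup (by omega) hL1
      have h1 : σ e < reach σ S L z := (Finset.mem_filter.1 he).2
      have := hmin p hpS
      omega
    have hzlowcard : (lows σ S L z).card = ℓ := by
      have := lows_card hσ hzS hLcard hL1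
      omega
    have hdisj : Disjoint (lows σ S L u) (lows σ S L z) := by
      rw [Finset.disjoint_left]
      intro e he₁ he₂
      have hNu : e ∈ Nv S u := lows_subset_Nv he₁
      have hNz : e ∈ Nv S z := lows_subset_Nv he₂
      have heq : e = pairOf u z :=
        eq_pairOf (fun h => hzu h.symm) (mem_Nv.1 hNu).1 (mem_Nv.1 hNu).2 (mem_Nv.1 hNz).2
      have h1 : σ e < reach σ S L u := (Finset.mem_filter.1 he₁).2
      rw [heq, ← hze] at h1
      omega
    refine ⟨u, huS, z, hzS, fun h => hzu h.symm, ?_⟩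
    have hsub : lows σ S L u ∪ lows σ S L z ⊆ B.filter (fun e => inc u e ∨ inc z e) := by
      intro e he
      rcases Finset.mem_union.1 he with he | he
      · exact Finset.mem_filter.2 ⟨hlowu he, Or.inl (mem_Nv.1 (lows_subset_Nv he)).2⟩
      · exact Finset.mem_filter.2 ⟨hlowz he, Or.inr (mem_Nv.1 (lows_subset_Nv he)).2⟩
    calc 2 * ℓ = (lows σ S L u).card + (lows σ S L z).card := by omega
      _ = _ := (Finset.card_union_of_disjoint hdisj).symm
      _ ≤ _ := Finset.card_le_card hsub

lemma ES_mono {S T : Finset ℕ} (h : S ⊆ T) : ES S ⊆ ES T := by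
  intro e he
  rw [mem_ES] at he ⊢
  exact ⟨h he.1, h he.2.1, he.2.2⟩

lemma pairOf_cases (u v : ℕ) : pairOf u v = (u, v) ∨ pairOf u v = (v, u) := by
  unfold pairOf; split
  · exact Or.inl rfl
  · exact Or.inr rfl

/-- deleting a vertex decreases a position by at most one -/
lemma pos_erase {v w : ℕ} {e : ℕ × ℕ} (hwv : w ≠ v) :
    pos σ S w e ≤ pos σ (S.erase v) w e + 1 := by
  have hsub : (Nv S w).filter (fun f => σ f ≤ σ e) ⊆
      insert (pairOf w v) ((Nv (S.erase v) w).filter (fun f => σ f ≤ σ e)) := by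
    intro f hf
    rw [Finset.mem_filter] at hf
    obtain ⟨hfN, hfσ⟩ := hf
    rcases eq_or_ne f (pairOf w v) with rfl | hne
    · exact Finset.mem_insert_self _ _
    · apply Finset.mem_insert_of_mem
      rw [Finset.mem_filter]
      refine ⟨?_, hfσ⟩
      obtain ⟨p, hpS, hpw, hpi, hpe⟩ := exists_other hfN
      have hpv : p ≠ v := by
        rintro rfl
        exact hne hpe
      have hfES := (mem_Nv.1 hfN).1
      rw [mem_ES] at hfES
      have hwS : w ∈ S := by
        rcases (mem_Nv.1 hfN).2 with h | h
        · exact h ▸ hfES.1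
        · exact h ▸ hfES.2.1
      rw [mem_Nv, mem_ES]
      rcases pairOf_cases w p with hc | hc <;> rw [hc] at hpe
      · refine ⟨⟨?_, ?_, hpe ▸ hfES.2.2⟩, ?_⟩
        · rw [hpe]; exact Finset.mem_erase.2 ⟨hwv, hwS⟩
        · rw [hpe]; exact Finset.mem_erase.2 ⟨hpv, hpS⟩
        · rw [hpe]; exact Or.inl rfl
      · refine ⟨⟨?_, ?_, hpe ▸ hfES.2.2⟩, ?_⟩
        · rw [hpe]; exact Finset.mem_erase.2 ⟨hpv, hpS⟩
        · rw [hpe]; exact Finset.mem_erase.2 ⟨hwv, hwS⟩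
        · rw [hpe]; exact Or.inr rfl
  calc pos σ S w e ≤ (insert (pairOf w v) ((Nv (S.erase v) w).filter (fun f => σ f ≤ σ e))).card :=
        Finset.card_le_card hsub
    _ ≤ pos σ (S.erase v) w e + 1 := by
        rw [pos, cnt]
        exact Finset.card_insert_le _ _

lemma not_inc_of_mem_erase {v : ℕ} {e : ℕ × ℕ} (he : e ∈ ES (S.erase v)) : ¬ inc v e := by
  rw [mem_ES] at he
  rintro (h | h)
  · exact (Finset.mem_erase.1 he.1).1 h
  · exact (Finset.mem_erase.1 he.2.1).1 h

lemma valid_erase {B : Finset (ℕ × ℕ)} {θ v : ℕ}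
    (hval : Valid σ S θ B) (hθ : 2 ≤ θ) :
    Valid σ (S.erase v) (θ - 2) (B.filter (fun e => ¬ inc v e)) := by
  intro e heES' heB'
  have hninc : ¬ inc v e := not_inc_of_mem_erase heES'
  have heB : e ∉ B := fun h => heB' (Finset.mem_filter.2 ⟨h, hninc⟩)
  have h := hval e (ES_mono (Finset.erase_subset _ _) heES') heB
  have h1 : pos σ S e.1 e ≤ pos σ (S.erase v) e.1 e + 1 :=
    pos_erase (fun hh => hninc (Or.inl hh))
  have h2 : pos σ S e.2 e ≤ pos σ (S.erase v) e.2 e + 1 :=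
    pos_erase (fun hh => hninc (Or.inr hh))
  omega

/-- The main abstract bound: any valid bad set has at least `(θ+2)²/8` elements. -/
theorem main_bound : ∀ θ : ℕ, ∀ S : Finset ℕ, ∀ B : Finset (ℕ × ℕ), ∀ σ : ℕ × ℕ → ℕ,
    Set.InjOn σ (ES S) → B ⊆ ES S → θ + 2 ≤ S.card → Valid σ S θ B →
    (θ + 2) ^ 2 ≤ 8 * B.card + 7 := by
  intro θ
  induction θ using Nat.strong_induction_on with
  | _ θ IH =>
    intro S B σ hσ hBS hcard hval
    match θ, IH with
    | 0, _ => nlinarith [Nat.zero_le B.card]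
    | 1, _ =>
      obtain ⟨u, -, hu⟩ := single_step hσ hval le_rfl (by omega) (by omega)
      have : 1 ≤ B.card := le_trans hu (Finset.card_le_card (Finset.filter_subset _ _))
      nlinarith
    | 2, _ =>
      obtain ⟨u, -, z, -, -, hu⟩ := pair_step (ℓ := 1) hσ hval le_rfl (by omega)
      have : 2 ≤ B.card := le_trans hu (Finset.card_le_card (Finset.filter_subset _ _))
      nlinarith
    | (θ' + 3), IH =>
      rcases Nat.even_or_odd (θ' + 3) with ⟨ℓ, hℓ⟩ | ⟨k, hk⟩
      · -- even case: θ'+3 = 2ℓ, ℓ ≥ 2 ; delete a pair, recurse at θ'-1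
        have hℓ2 : 2 ≤ ℓ := by omega
        obtain ⟨u, huS, z, hzS, huz, hcnt⟩ :=
          pair_step (ℓ := ℓ) hσ (by rwa [show 2 * ℓ = θ' + 3 by omega]) (by omega) (by omega)
        set S'' := (S.erase u).erase z with hS''
        set B'' := (B.filter (fun e => ¬ inc u e)).filter (fun e => ¬ inc z e) with hB''
        have hval'' : Valid σ S'' (θ' - 1) B'' := by
          have h1 := valid_erase (v := u) hval (by omega)
          have h2 := valid_erase (v := z) h1 (by omega)
          rwa [show θ' + 3 - 2 - 2 = θ' - 1 by omega] at h2
        have hB''sub : B'' ⊆ ES S'' := by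
          intro e he
          rw [hB'', Finset.mem_filter, Finset.mem_filter] at he
          obtain ⟨⟨heB, hnu⟩, hnz⟩ := he
          have heES := hBS heB
          rw [mem_ES] at heES ⊢
          rw [hS'']
          unfold inc at hnu hnz
          push_neg at hnu hnz
          refine ⟨Finset.mem_erase.2 ⟨hnz.1, Finset.mem_erase.2 ⟨hnu.1, heES.1⟩⟩,
            Finset.mem_erase.2 ⟨hnz.2, Finset.mem_erase.2 ⟨hnu.2, heES.2.1⟩⟩, heES.2.2⟩
        have hcard'' : (θ' - 1) + 2 ≤ S''.card := by
          rw [hS'', Finset.card_erase_of_mem (Finset.mem_erase.2 ⟨Ne.symm huz, hzS⟩),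
            Finset.card_erase_of_mem huS]
          omega
        have hIH := IH (θ' - 1) (by omega) S'' B'' σ
          (hσ.mono (Finset.coe_subset.2 (ES_mono ((Finset.erase_subset _ _).trans
            (Finset.erase_subset _ _))))) hB''sub hcard'' hval''
        have hsplit : (B.filter (fun e => inc u e ∨ inc z e)).card + B''.card ≤ B.card := by
          have hdisj : Disjoint (B.filter (fun e => inc u e ∨ inc z e)) B'' := by
            rw [Finset.disjoint_left]
            intro e h1 h2
            rw [Finset.mem_filter] at h1
            rw [hB'', Finset.mem_filter, Finset.mem_filter] at h2
            tauto
          have hsub : (B.filter (fun e => inc u e ∨ inc z e)) ∪ B'' ⊆ B := by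
            intro e he
            rcases Finset.mem_union.1 he with h | h
            · exact (Finset.mem_filter.1 h).1
            · exact (Finset.mem_filter.1 (Finset.mem_filter.1 h).1).1
          calc _ = ((B.filter (fun e => inc u e ∨ inc z e)) ∪ B'').card :=
                (Finset.card_union_of_disjoint hdisj).symm
            _ ≤ B.card := Finset.card_le_card hsub
        rw [show θ' - 1 + 2 = θ' + 1 by omega] at hIH
        nlinarith [hIH, hsplit, hcnt, hℓ]
      · -- odd case: θ'+3 = 2k+1, k ≥ 1 ; delete one vertex, recurse at θ'+1
        have hk1 : 1 ≤ k := by omega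
        obtain ⟨u, huS, hcnt⟩ :=
          single_step (m := k + 1) hσ hval (by omega) (by omega) (by omega)
        set S' := S.erase u with hS'
        set B' := B.filter (fun e => ¬ inc u e) with hB'
        have hval' : Valid σ S' (θ' + 1) B' := by
          have h := valid_erase (v := u) hval (by omega)
          rwa [show θ' + 3 - 2 = θ' + 1 by omega] at h
        have hB'sub : B' ⊆ ES S' := by
          intro e he
          rw [hB', Finset.mem_filter] at he
          obtain ⟨heB, hnu⟩ := he
          have heES := hBS heB
          rw [mem_ES] at heES ⊢
          unfold inc at hnu
          push_neg at hnu
          exact ⟨Finset.mem_erase.2 ⟨hnu.1, heES.1⟩, Finset.mem_erase.2 ⟨hnu.2, heES.2.1⟩,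
            heES.2.2⟩
        have hcard' : (θ' + 1) + 2 ≤ S'.card := by
          rw [hS', Finset.card_erase_of_mem huS]
          omega
        have hIH := IH (θ' + 1) (by omega) S' B' σ
          (hσ.mono (Finset.coe_subset.2 (ES_mono (Finset.erase_subset _ _)))) hB'sub hcard' hval'
        have hsplit : (B.filter (inc u)).card + B'.card ≤ B.card := by
          have := Finset.card_filter_add_card_filter_not (s := B) (p := inc u)
          rw [hB']
          omega
        nlinarith [hIH, hsplit, hcnt, hk]

end Counting





variable {α : Type*} [LinearOrder α]

lemma sym2_eq_inf_sup (e : Sym2 α) : e = s(e.inf, e.sup) := by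
  induction e using Sym2.ind with
  | _ a b =>
    rw [Sym2.inf_mk, Sym2.sup_mk]
    rcases le_total a b with h | h
    · rw [inf_eq_left.2 h, sup_eq_right.2 h]
    · rw [inf_eq_right.2 h, sup_eq_left.2 h]
      exact Sym2.eq_swap.symm

lemma sym2_mem_iff' (e : Sym2 α) (w : α) : w ∈ e ↔ w = e.inf ∨ w = e.sup := by
  conv_lhs => rw [sym2_eq_inf_sup e]
  exact Sym2.mem_iff

lemma sym2_inf_le_sup (e : Sym2 α) : e.inf ≤ e.sup := by
  induction e using Sym2.ind with
  | _ a b => rw [Sym2.inf_mk, Sym2.sup_mk]; exact inf_le_sup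



end Dynamo13



open Dynamo13

/-- Any dynamic monopoly of the line graph of `Kₙ`, with every edge having threshold
`n − 2`, has at least `⌊n²/8⌋` elements. -/
theorem stmt13 (n : ℕ)
    (D : Set (⊤ : SimpleGraph (Fin n)).edgeSet)
    (hD : IsDynamo (⊤ : SimpleGraph (Fin n)).lineGraph (fun _ => n - 2) D) :
    n ^ 2 / 8 ≤ D.ncard := by
  classical
  rcases Nat.lt_or_ge n 2 with hn | hn
  · interval_cases n <;> simp
  obtain ⟨j, hj⟩ := hD
  set A : ℕ → Set (⊤ : SimpleGraph (Fin n)).edgeSet := fun i =>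
    (activationStep (⊤ : SimpleGraph (Fin n)).lineGraph (fun _ => n - 2))^[i] D with hA
  set rank : (⊤ : SimpleGraph (Fin n)).edgeSet → ℕ := fun e => sInf {i | e ∈ A i} with hrank
  have hAj : ∀ e : (⊤ : SimpleGraph (Fin n)).edgeSet, e ∈ A j := by
    intro e
    show e ∈ (activationStep (⊤ : SimpleGraph (Fin n)).lineGraph (fun _ => n - 2))^[j] D
    rw [hj]
    trivial
  have rank_mem : ∀ e : (⊤ : SimpleGraph (Fin n)).edgeSet, e ∈ A (rank e) := by
    intro e
    have h : sInf {i | e ∈ A i} ∈ {i | e ∈ A i} := Nat.sInf_mem ⟨j, hAj e⟩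
    exact h
  have rank_notmem : ∀ (e : (⊤ : SimpleGraph (Fin n)).edgeSet) (i : ℕ),
      i < rank e → e ∉ A i := by
    intro e i hi
    exact Nat.notMem_of_lt_sInf hi
  have rank_le : ∀ (e : (⊤ : SimpleGraph (Fin n)).edgeSet) (i : ℕ), e ∈ A i → rank e ≤ i := by
    intro e i h
    exact Nat.sInf_le h
  -- the key activation property
  have hkey : ∀ e : (⊤ : SimpleGraph (Fin n)).edgeSet, e ∉ D →
      n - 2 ≤ (((⊤ : SimpleGraph (Fin n)).lineGraph.neighborSet e) ∩
        {f | rank f < rank e}).ncard := by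
    intro e heD
    have hr0 : rank e ≠ 0 := by
      intro h
      have h2 := rank_mem e
      rw [h] at h2
      exact heD h2
    obtain ⟨r, hr⟩ : ∃ r, rank e = r + 1 := ⟨rank e - 1, by omega⟩
    have hmem : e ∈ A (r + 1) := hr ▸ rank_mem e
    have hnot : e ∉ A r := rank_notmem e r (by omega)
    have hmem2 : e ∈ activationStep (⊤ : SimpleGraph (Fin n)).lineGraph (fun _ => n - 2) (A r) := by
      have hstep := Function.iterate_succ_apply'
        (activationStep (⊤ : SimpleGraph (Fin n)).lineGraph (fun _ => n - 2)) r D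
      show e ∈ (activationStep (⊤ : SimpleGraph (Fin n)).lineGraph (fun _ => n - 2))
        ((activationStep (⊤ : SimpleGraph (Fin n)).lineGraph (fun _ => n - 2))^[r] D)
      rw [← hstep]
      exact hmem
    rcases hmem2 with hmem2 | hmem2
    · exact absurd hmem2 hnot
    · have hsub : ((⊤ : SimpleGraph (Fin n)).lineGraph.neighborSet e) ∩ A r ⊆
          ((⊤ : SimpleGraph (Fin n)).lineGraph.neighborSet e) ∩ {f | rank f < rank e} := by
        rintro f ⟨hf1, hf2⟩
        refine ⟨hf1, ?_⟩
        have := rank_le f r hf2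
        simp only [Set.mem_setOf_eq]
        omega
      calc n - 2 ≤ _ := hmem2
        _ ≤ _ := Set.ncard_le_ncard hsub (Set.toFinite _)
  -- a globally injective time function compatible with rank
  set M := Fintype.card (⊤ : SimpleGraph (Fin n)).edgeSet with hM
  set ι : (⊤ : SimpleGraph (Fin n)).edgeSet → ℕ :=
    fun e => ((Fintype.equivFin _) e).val with hι
  set σ₀ : (⊤ : SimpleGraph (Fin n)).edgeSet → ℕ := fun e => rank e * M + ι e with hσ₀
  have hιlt : ∀ e, ι e < M := fun e => ((Fintype.equivFin _) e).isLt
  have hιinj : Function.Injective ι := by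
    intro e f h
    exact (Fintype.equivFin _).injective (Fin.val_injective h)
  have hσ₀mono : ∀ e f, rank e < rank f → σ₀ e < σ₀ f := by
    intro e f h
    have h1 : ι e < M := hιlt e
    have h2 : (rank e + 1) * M ≤ rank f * M := Nat.mul_le_mul_right M h
    have h3 : rank e * M + ι e < (rank e + 1) * M := by
      rw [Nat.add_mul, Nat.one_mul]
      omega
    calc σ₀ e = rank e * M + ι e := rfl
      _ < (rank e + 1) * M := h3
      _ ≤ rank f * M := h2
      _ ≤ rank f * M + ι f := Nat.le_add_right _ _
  have hσ₀inj : Function.Injective σ₀ := by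
    intro e f h
    rcases lt_trichotomy (rank e) (rank f) with hlt | heq | hgt
    · exact absurd h (Nat.ne_of_lt (hσ₀mono e f hlt))
    · have h' : rank e * M + ι e = rank f * M + ι f := h
      rw [heq] at h'
      have : ι e = ι f := by omega
      exact hιinj this
    · exact absurd h.symm (Nat.ne_of_lt (hσ₀mono f e hgt))
  -- the map from edges to abstract ordered pairs
  set φ : (⊤ : SimpleGraph (Fin n)).edgeSet → ℕ × ℕ := fun e =>
    ((e : Sym2 (Fin n)).inf.val, (e : Sym2 (Fin n)).sup.val) with hφ
  have hinfsup : ∀ e : (⊤ : SimpleGraph (Fin n)).edgeSet,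
      (e : Sym2 (Fin n)).inf ≠ (e : Sym2 (Fin n)).sup := by
    intro e hctr
    have h2 : (e : Sym2 (Fin n)) ∈ (⊤ : SimpleGraph (Fin n)).edgeSet := e.2
    rw [sym2_eq_inf_sup (e : Sym2 (Fin n)), hctr, SimpleGraph.mem_edgeSet,
      SimpleGraph.top_adj] at h2
    exact h2 rfl
  have hinflt : ∀ e : (⊤ : SimpleGraph (Fin n)).edgeSet,
      (e : Sym2 (Fin n)).inf < (e : Sym2 (Fin n)).sup :=
    fun e => lt_of_le_of_ne (sym2_inf_le_sup _) (hinfsup e)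
  have hφmem : ∀ e, φ e ∈ ES (Finset.range n) := by
    intro e
    rw [mem_ES]
    exact ⟨Finset.mem_range.2 ((e : Sym2 (Fin n)).inf.isLt),
      Finset.mem_range.2 ((e : Sym2 (Fin n)).sup.isLt), hinflt e⟩
  have hφinj : Function.Injective φ := by
    intro e f h
    rw [Prod.ext_iff] at h
    have h1 : (e : Sym2 (Fin n)).inf = (f : Sym2 (Fin n)).inf := Fin.val_injective h.1
    have h2 : (e : Sym2 (Fin n)).sup = (f : Sym2 (Fin n)).sup := Fin.val_injective h.2
    apply Subtype.ext
    rw [sym2_eq_inf_sup (e : Sym2 (Fin n)), sym2_eq_inf_sup (f : Sym2 (Fin n)), h1, h2]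
  have hφsurj : ∀ p ∈ ES (Finset.range n), ∃ e, φ e = p := by
    intro p hp
    rw [mem_ES] at hp
    obtain ⟨hp1, hp2, hp3⟩ := hp
    set u : Fin n := ⟨p.1, Finset.mem_range.1 hp1⟩ with hu
    set v : Fin n := ⟨p.2, Finset.mem_range.1 hp2⟩ with hv
    have huv : u < v := hp3
    refine ⟨⟨s(u, v), ?_⟩, ?_⟩
    · rw [SimpleGraph.mem_edgeSet, SimpleGraph.top_adj]
      exact ne_of_lt huv
    · show ((s(u,v) : Sym2 (Fin n)).inf.val, (s(u,v) : Sym2 (Fin n)).sup.val) = p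
      rw [Sym2.inf_mk, Sym2.sup_mk, inf_eq_left.2 (le_of_lt huv), sup_eq_right.2 (le_of_lt huv)]
  have hinc : ∀ (w : Fin n) (e : (⊤ : SimpleGraph (Fin n)).edgeSet),
      (w ∈ (e : Sym2 (Fin n))) ↔ inc w.val (φ e) := by
    intro w e
    rw [sym2_mem_iff']
    show (w = (e : Sym2 (Fin n)).inf ∨ w = (e : Sym2 (Fin n)).sup) ↔ _
    unfold inc
    constructor
    · rintro (h | h)
      · exact Or.inl (by rw [h])
      · exact Or.inr (by rw [h])
    · rintro (h | h)
      · exact Or.inl (Fin.val_injective h.symm)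
      · exact Or.inr (Fin.val_injective h.symm)
  -- the abstract time function
  set σab : ℕ × ℕ → ℕ := fun p => if h : ∃ e, φ e = p then σ₀ h.choose else 0 with hσab
  have hσabφ : ∀ e, σab (φ e) = σ₀ e := by
    intro e
    have hex : ∃ f, φ f = φ e := ⟨e, rfl⟩
    show (if h : ∃ f, φ f = φ e then σ₀ h.choose else 0) = σ₀ e
    rw [dif_pos hex]
    congr 1
    exact hφinj hex.choose_spec
  have hσabinj : Set.InjOn σab (ES (Finset.range n) : Finset (ℕ × ℕ)) := by
    intro p hp q hq h
    obtain ⟨ep, hep⟩ := hφsurj p (by exact_mod_cast hp)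
    obtain ⟨eq', heq'⟩ := hφsurj q (by exact_mod_cast hq)
    rw [← hep, ← heq', hσabφ, hσabφ] at h
    rw [← hep, ← heq', hσ₀inj h]
  -- the bad set
  have hDfin : D.Finite := Set.toFinite D
  set B := hDfin.toFinset.image φ with hB
  have hBsub : B ⊆ ES (Finset.range n) := by
    intro p hp
    obtain ⟨e, -, rfl⟩ := Finset.mem_image.1 hp
    exact hφmem e
  have hBcard : B.card ≤ D.ncard := by
    rw [Set.ncard_eq_toFinset_card _ hDfin]
    exact Finset.card_image_le
  -- positions in the abstract world equal counts in the edge world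
  have hposbr : ∀ (w : Fin n) (e : (⊤ : SimpleGraph (Fin n)).edgeSet),
      pos σab (Finset.range n) w.val (φ e) =
      (Finset.univ.filter
        (fun f : (⊤ : SimpleGraph (Fin n)).edgeSet => w ∈ (f : Sym2 (Fin n)) ∧ σ₀ f ≤ σ₀ e)).card := by
    intro w e
    rw [pos, cnt]
    symm
    apply Finset.card_bij (fun f _ => φ f)
    · intro f hf
      rw [Finset.mem_filter] at hf
      rw [Finset.mem_filter]
      refine ⟨mem_Nv.2 ⟨hφmem f, ?_⟩, ?_⟩
      · have := (hinc w f).1 hf.2.1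
        unfold inc at this
        exact this
      · rw [hσabφ, hσabφ]
        exact hf.2.2
    · intro f hf g hg h
      exact hφinj h
    · intro p hp
      rw [Finset.mem_filter] at hp
      obtain ⟨hpN, hpσ⟩ := hp
      obtain ⟨f, hf⟩ := hφsurj p (mem_Nv.1 hpN).1
      refine ⟨f, ?_, hf⟩
      rw [Finset.mem_filter]
      refine ⟨Finset.mem_univ _, ?_, ?_⟩
      · rw [hinc w f, hf]
        exact (mem_Nv.1 hpN).2
      · rw [← hσabφ, ← hσabφ e, hf]
        exact hpσ
  -- validity
  have hval : Valid σab (Finset.range n) (n - 2) B := by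
    intro p hp hpB
    obtain ⟨e, rfl⟩ := hφsurj p hp
    have heD : e ∉ D := by
      intro h
      exact hpB (Finset.mem_image.2 ⟨e, hDfin.mem_toFinset.2 h, rfl⟩)
    have hk := hkey e heD
    set u := (e : Sym2 (Fin n)).inf with hudef
    set v := (e : Sym2 (Fin n)).sup with hvdef
    have hue : u ∈ (e : Sym2 (Fin n)) := (sym2_mem_iff' _ _).2 (Or.inl rfl)
    have hve : v ∈ (e : Sym2 (Fin n)) := (sym2_mem_iff' _ _).2 (Or.inr rfl)
    have hsub : (((⊤ : SimpleGraph (Fin n)).lineGraph.neighborSet e) ∩ {f | rank f < rank e})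
        ⊆ {f : (⊤ : SimpleGraph (Fin n)).edgeSet | u ∈ (f : Sym2 (Fin n)) ∧ σ₀ f < σ₀ e} ∪
          {f | v ∈ (f : Sym2 (Fin n)) ∧ σ₀ f < σ₀ e} := by
      rintro f ⟨hf1, hf2⟩
      have hadj : (⊤ : SimpleGraph (Fin n)).lineGraph.Adj e f :=
        ((⊤ : SimpleGraph (Fin n)).lineGraph.mem_neighborSet e f).1 hf1
      obtain ⟨x, hx⟩ := hadj.2
      rw [Set.mem_inter_iff] at hx
      have hxe : x ∈ (e : Sym2 (Fin n)) := by simpa using hx.1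
      have hxf : x ∈ (f : Sym2 (Fin n)) := by simpa using hx.2
      have hσlt : σ₀ f < σ₀ e := hσ₀mono f e hf2
      rcases (sym2_mem_iff' (e : Sym2 (Fin n)) x).1 hxe with rfl | rfl
      · exact Or.inl ⟨hxf, hσlt⟩
      · exact Or.inr ⟨hxf, hσlt⟩
    have hcard2 : n - 2 ≤
        ({f : (⊤ : SimpleGraph (Fin n)).edgeSet | u ∈ (f : Sym2 (Fin n)) ∧ σ₀ f < σ₀ e}).ncard +
        ({f : (⊤ : SimpleGraph (Fin n)).edgeSet | v ∈ (f : Sym2 (Fin n)) ∧ σ₀ f < σ₀ e}).ncard :=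
      le_trans hk (le_trans (Set.ncard_le_ncard hsub (Set.toFinite _)) (Set.ncard_union_le _ _))
    have hconv : ∀ (w : Fin n),
        ({f : (⊤ : SimpleGraph (Fin n)).edgeSet | w ∈ (f : Sym2 (Fin n)) ∧ σ₀ f < σ₀ e}).ncard =
        (Finset.univ.filter
          (fun f : (⊤ : SimpleGraph (Fin n)).edgeSet => w ∈ (f : Sym2 (Fin n)) ∧ σ₀ f < σ₀ e)).card := by
      intro w
      rw [Set.ncard_eq_toFinset_card', Set.toFinset_setOf]
    have hstep : ∀ w : Fin n, w ∈ (e : Sym2 (Fin n)) →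
        (Finset.univ.filter
          (fun f : (⊤ : SimpleGraph (Fin n)).edgeSet => w ∈ (f : Sym2 (Fin n)) ∧ σ₀ f < σ₀ e)).card + 1 ≤
        (Finset.univ.filter
          (fun f : (⊤ : SimpleGraph (Fin n)).edgeSet => w ∈ (f : Sym2 (Fin n)) ∧ σ₀ f ≤ σ₀ e)).card := by
      intro w hw
      have hnotmem : e ∉ Finset.univ.filter
          (fun f : (⊤ : SimpleGraph (Fin n)).edgeSet => w ∈ (f : Sym2 (Fin n)) ∧ σ₀ f < σ₀ e) := by
        rw [Finset.mem_filter]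
        rintro ⟨-, -, h⟩
        exact absurd rfl (Nat.ne_of_lt h)
      have hins : insert e (Finset.univ.filter
          (fun f : (⊤ : SimpleGraph (Fin n)).edgeSet => w ∈ (f : Sym2 (Fin n)) ∧ σ₀ f < σ₀ e)) ⊆
          Finset.univ.filter
          (fun f : (⊤ : SimpleGraph (Fin n)).edgeSet => w ∈ (f : Sym2 (Fin n)) ∧ σ₀ f ≤ σ₀ e) := by
        intro f hf
        rcases Finset.mem_insert.1 hf with rfl | hf
        · exact Finset.mem_filter.2 ⟨Finset.mem_univ _, hw, le_rfl⟩
        · rw [Finset.mem_filter] at hf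
          exact Finset.mem_filter.2 ⟨Finset.mem_univ _, hf.2.1, le_of_lt hf.2.2⟩
      calc _ = (insert e (Finset.univ.filter
            (fun f : (⊤ : SimpleGraph (Fin n)).edgeSet => w ∈ (f : Sym2 (Fin n)) ∧ σ₀ f < σ₀ e))).card := (Finset.card_insert_of_notMem hnotmem).symm
        _ ≤ _ := Finset.card_le_card hins
    have h1 := hstep u hue
    have h2 := hstep v hve
    have hp1 := hposbr u e
    have hp2 := hposbr v e
    have hcu := hconv u
    have hcv := hconv v
    have hfst : (φ e).1 = u.val := rfl
    have hsnd : (φ e).2 = v.val := rfl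
    rw [hfst, hsnd, hp1, hp2]
    omega
  -- apply the abstract bound
  have hmain := main_bound (n - 2) (Finset.range n) B σab hσabinj hBsub
    (by rw [Finset.card_range]; omega) hval
  rw [show n - 2 + 2 = n by omega] at hmain
  have hfin : n ^ 2 ≤ 8 * D.ncard + 7 := by
    have := hBcard
    omega
  omega
end

section
/- The minimum size of a dynamic monopoly of the Cartesian product Kₙ □ Kₙ, where every vertex has threshold n − 1, equals ⌊n²/4⌋. -/
/-!
Lower bound, for `K_α □ K_β` and any threshold `t` below twice the number of rows and of columns,
by induction on `t`: unless `D` is everything, some vertex `(a, b) ∉ D` is activated first, so it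
has `t` neighbours in `D`, all in row `a` or column `b`. Deleting row `a` and column `b` costs every
other vertex at most two neighbours, so the rest of `D` is a dynamo of the smaller grid for the
threshold `t - 2`, and `⌊(t + 1)² / 4⌋ = t + ⌊(t - 1)² / 4⌋`.

Upper bound: `staircase n` has `⌊(n - i) / 2⌋` cells in row `i`, hence `⌊n² / 4⌋` cells, and it
activates the grid one anti-diagonal at a time. A cell `(i, j)` off the staircase with `i + j = s`
sees the `s` cells of its row and column on earlier anti-diagonals, and beyond it every second
cell of its row and of its column; these two alternating runs supply the missing `n - 1 - s`.
-/

open SimpleGraph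

section Activation

variable {V : Type*} {G : SimpleGraph V} {τ : V → ℕ}

lemma activationStep_monotone [Finite V] : Monotone (activationStep G τ) := by
  rintro A B h v (hv | hv)
  · exact Or.inl (h hv)
  · exact Or.inr (hv.trans (Set.ncard_le_ncard (Set.inter_subset_inter_right _ h)))

lemma IsDynamo.exists_notMem_le_ncard {D : Set V} (hD : IsDynamo G τ D) (hne : D ≠ Set.univ) :
    ∃ v ∉ D, τ v ≤ (G.neighborSet v ∩ D).ncard := by
  by_contra! h
  have hfix : activationStep G τ D = D :=
    Set.union_eq_left.2 fun v hv => by_contra fun hvD => (h v hvD).not_ge hv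
  obtain ⟨j, hj⟩ := hD
  exact hne (by rwa [Function.iterate_fixed hfix] at hj)

variable {W : Type*} {H : SimpleGraph W} {σ : W → ℕ}

lemma preimage_activationStep_subset (f : W → V) (c : ℕ) (hσ : ∀ w, σ w + c ≤ τ (f w))
    (hN : ∀ w A, (G.neighborSet (f w) ∩ A).ncard ≤ (H.neighborSet w ∩ f ⁻¹' A).ncard + c)
    (A : Set V) : f ⁻¹' activationStep G τ A ⊆ activationStep H σ (f ⁻¹' A) := by
  rintro w (hw | hw)
  · exact Or.inl hw
  · exact Or.inr (Nat.le_of_add_le_add_right ((hσ w).trans (hw.trans (hN w A))))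

lemma IsDynamo.preimage [Finite W] (f : W → V) (c : ℕ) (hσ : ∀ w, σ w + c ≤ τ (f w))
    (hN : ∀ w A, (G.neighborSet (f w) ∩ A).ncard ≤ (H.neighborSet w ∩ f ⁻¹' A).ncard + c)
    {D : Set V} (hD : IsDynamo G τ D) : IsDynamo H σ (f ⁻¹' D) := by
  have key : ∀ j A, f ⁻¹' (activationStep G τ)^[j] A ⊆ (activationStep H σ)^[j] (f ⁻¹' A) := by
    intro j
    induction j with
    | zero => exact fun _ => subset_rfl
    | succ j ih =>
      intro A
      rw [Function.iterate_succ_apply, Function.iterate_succ_apply]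
      exact (ih _).trans (activationStep_monotone.iterate j
        (preimage_activationStep_subset f c hσ hN A))
  obtain ⟨j, hj⟩ := hD
  exact ⟨j, Set.eq_univ_of_univ_subset (by simpa [hj] using key j D)⟩

end Activation

section Rook

variable {α β : Type*}

lemma neighborSet_boxProd_top_inter (a : α) (b : β) (A : Set (α × β)) :
    ((⊤ : SimpleGraph α) □ (⊤ : SimpleGraph β)).neighborSet (a, b) ∩ A =
      Prod.mk a '' {y | y ≠ b ∧ (a, y) ∈ A} ∪ (fun x => (x, b)) '' {x | x ≠ a ∧ (x, b) ∈ A} := by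
  ext ⟨x, y⟩
  simp only [Set.mem_inter_iff, mem_neighborSet, boxProd_adj, top_adj, Set.mem_union,
    Set.mem_image, Set.mem_ofPred_eq, Prod.mk.injEq]
  constructor
  · rintro ⟨⟨hx, rfl⟩ | ⟨hy, rfl⟩, hA⟩
    · exact Or.inr ⟨x, ⟨hx.symm, hA⟩, rfl, rfl⟩
    · exact Or.inl ⟨y, ⟨hy.symm, hA⟩, rfl, rfl⟩
  · rintro (⟨y, ⟨hy, hA⟩, rfl, rfl⟩ | ⟨x, ⟨hx, hA⟩, rfl, rfl⟩)
    · exact ⟨Or.inr ⟨Ne.symm hy, rfl⟩, hA⟩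
    · exact ⟨Or.inl ⟨Ne.symm hx, rfl⟩, hA⟩

variable [Finite α] [Finite β]

lemma ncard_neighborSet_boxProd_top_inter (a : α) (b : β) (A : Set (α × β)) :
    (((⊤ : SimpleGraph α) □ (⊤ : SimpleGraph β)).neighborSet (a, b) ∩ A).ncard =
      {y | y ≠ b ∧ (a, y) ∈ A}.ncard + {x | x ≠ a ∧ (x, b) ∈ A}.ncard := by
  rw [neighborSet_boxProd_top_inter, Set.ncard_union_eq, Set.ncard_image_of_injective _
    (Prod.mk_right_injective a), Set.ncard_image_of_injective _ (Prod.mk_left_injective b)]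
  rw [Set.disjoint_left]
  rintro _ ⟨y, ⟨hy, -⟩, rfl⟩ ⟨x, -, hxy⟩
  exact hy (congrArg Prod.snd hxy).symm

lemma ncard_le_ncard_preimage_val_add_one (a : α) (S : Set α) :
    S.ncard ≤ (Subtype.val ⁻¹' S : Set {x // x ≠ a}).ncard + 1 := by
  have hS : S ⊆ insert a (Subtype.val '' (Subtype.val ⁻¹' S : Set {x // x ≠ a})) := by
    intro x hx
    by_cases hxa : x = a
    · exact Or.inl hxa
    · exact Or.inr ⟨⟨x, hxa⟩, hx, rfl⟩
  calc S.ncard ≤ _ := Set.ncard_le_ncard hS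
    _ ≤ _ := Set.ncard_insert_le _ _
    _ = _ := by rw [Set.ncard_image_of_injective _ Subtype.val_injective]

abbrev subgridEmbedding (a : α) (b : β) : {x // x ≠ a} × {y // y ≠ b} → α × β :=
  Prod.map Subtype.val Subtype.val

lemma ncard_neighborSet_inter_le_subgrid (a : α) (b : β) (w : {x // x ≠ a} × {y // y ≠ b})
    (A : Set (α × β)) :
    (((⊤ : SimpleGraph α) □ (⊤ : SimpleGraph β)).neighborSet (subgridEmbedding a b w) ∩ A).ncard ≤
      (((⊤ : SimpleGraph _) □ (⊤ : SimpleGraph _)).neighborSet w ∩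
        subgridEmbedding a b ⁻¹' A).ncard + 2 := by
  obtain ⟨x, y⟩ := w
  have hrow : {y' | y' ≠ y ∧ (x, y') ∈ subgridEmbedding a b ⁻¹' A} =
      Subtype.val ⁻¹' {y' | y' ≠ y.1 ∧ (x.1, y') ∈ A} := by
    ext y'
    simp [Subtype.ext_iff]
  have hcol : {x' | x' ≠ x ∧ (x', y) ∈ subgridEmbedding a b ⁻¹' A} =
      Subtype.val ⁻¹' {x' | x' ≠ x.1 ∧ (x', y.1) ∈ A} := by
    ext x'
    simp [Subtype.ext_iff]
  rw [show subgridEmbedding a b (x, y) = (x.1, y.1) from rfl, ncard_neighborSet_boxProd_top_inter,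
    ncard_neighborSet_boxProd_top_inter, hrow, hcol]
  have := ncard_le_ncard_preimage_val_add_one b {y' | y' ≠ y.1 ∧ (x.1, y') ∈ A}
  have := ncard_le_ncard_preimage_val_add_one a {x' | x' ≠ x.1 ∧ (x', y.1) ∈ A}
  omega

end Rook

section LowerBound

lemma Nat.card_subtype_ne {γ : Type*} [Finite γ] (c : γ) :
    Nat.card {x // x ≠ c} = Nat.card γ - 1 := by
  have := Fintype.ofFinite γ
  classical
  simp [Nat.card_eq_fintype_card, Fintype.card_subtype_compl]

variable {α β : Type*} [Finite α] [Finite β]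

lemma ncard_neighborSet_inter_add_ncard_preimage_subgrid_le (a : α) (b : β) (D : Set (α × β)) :
    (((⊤ : SimpleGraph α) □ (⊤ : SimpleGraph β)).neighborSet (a, b) ∩ D).ncard +
      (subgridEmbedding a b ⁻¹' D).ncard ≤ D.ncard := by
  have hinj : Function.Injective (subgridEmbedding a b) :=
    Subtype.val_injective.prodMap Subtype.val_injective
  have hdisj : Disjoint (((⊤ : SimpleGraph α) □ (⊤ : SimpleGraph β)).neighborSet (a, b) ∩ D)
      (subgridEmbedding a b '' (subgridEmbedding a b ⁻¹' D)) := by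
    rw [Set.disjoint_left]
    rintro _ ⟨hadj, -⟩ ⟨⟨⟨x, hx⟩, ⟨y, hy⟩⟩, -, rfl⟩
    rcases (boxProd_adj.1 hadj) with ⟨-, hb⟩ | ⟨-, ha⟩
    exacts [hy hb.symm, hx ha.symm]
  rw [← Set.ncard_image_of_injective _ hinj, ← Set.ncard_union_eq hdisj]
  exact Set.ncard_le_ncard (Set.union_subset Set.inter_subset_right (Set.image_preimage_subset _ _))

theorem IsDynamo.sq_div_four_le_ncard (t : ℕ) (hα : t < 2 * Nat.card α)
    (hβ : t < 2 * Nat.card β) {D : Set (α × β)}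
    (hD : IsDynamo ((⊤ : SimpleGraph α) □ (⊤ : SimpleGraph β)) (fun _ => t) D) :
    (t + 1) ^ 2 / 4 ≤ D.ncard := by
  induction t using Nat.strong_induction_on generalizing α β with
  | _ t ih =>
  rcases eq_or_ne D Set.univ with rfl | hne
  · rw [Set.ncard_univ, Nat.card_prod]
    exact Nat.div_le_of_le_mul (by nlinarith)
  obtain ⟨⟨a, b⟩, -, htrigger⟩ := hD.exists_notMem_le_ncard hne
  have hsplit := ncard_neighborSet_inter_add_ncard_preimage_subgrid_le a b D
  obtain ht | ht := lt_or_ge t 2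
  · interval_cases t <;> omega
  obtain ⟨s, rfl⟩ : ∃ s, t = s + 2 := ⟨t - 2, by omega⟩
  have hD' := hD.preimage (subgridEmbedding a b) 2 (σ := fun _ => s) (fun _ => le_rfl)
    (ncard_neighborSet_inter_le_subgrid a b)
  have hα' : s < 2 * Nat.card {x // x ≠ a} := by rw [Nat.card_subtype_ne]; omega
  have hβ' : s < 2 * Nat.card {y // y ≠ b} := by rw [Nat.card_subtype_ne]; omega
  have hIH := ih s (by omega) hα' hβ' hD'
  have hsq : (s + 2 + 1) ^ 2 / 4 = (s + 1) ^ 2 / 4 + (s + 2) := by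
    rw [show (s + 2 + 1) ^ 2 = (s + 1) ^ 2 + (s + 2) * 4 by ring,
      Nat.add_mul_div_right _ _ four_pos]
  omega

end LowerBound

lemma Set.ncard_eq_sum_ncard_slice {α β : Type*} [Fintype α] [Fintype β] (S : Set (α × β)) :
    S.ncard = ∑ a, {b | (a, b) ∈ S}.ncard := by
  classical
  simp only [Set.ncard_eq_toFinset_card', ← Set.filter_mem_univ_eq_toFinset, Finset.card_filter,
    Fintype.sum_prod_type]
  rfl

lemma sq_succ_div_four (n : ℕ) : (n + 1) ^ 2 / 4 = n ^ 2 / 4 + (n + 1) / 2 := by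
  obtain ⟨m, rfl | rfl⟩ := Nat.even_or_odd' n
  · have h₁ : (2 * m + 1) ^ 2 = 4 * (m ^ 2 + m) + 1 := by ring
    have h₂ : (2 * m) ^ 2 = 4 * m ^ 2 := by ring
    omega
  · have h₁ : (2 * m + 1 + 1) ^ 2 = 4 * (m ^ 2 + 2 * m + 1) := by ring
    have h₂ : (2 * m + 1) ^ 2 = 4 * (m ^ 2 + m) + 1 := by ring
    omega

lemma sum_range_succ_div_two (n : ℕ) : ∑ k ∈ Finset.range n, (k + 1) / 2 = n ^ 2 / 4 := by
  induction n with
  | zero => rfl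
  | succ n ih => rw [Finset.sum_range_succ, ih, sq_succ_div_four]

section Staircase

/-- The dynamo of the paper: the even anti-diagonals `i + j ≤ n - 2`, together with the cells of
anti-diagonal `n - 1` whose coordinates are both odd. -/
def staircase (n : ℕ) : Set (Fin n × Fin n) :=
  {v | v.1.val % 2 = v.2.val % 2 ∧ v.1.val + v.2.val + 2 ≤ n + v.1.val % 2}

def staircaseFilled (n s : ℕ) : Set (Fin n × Fin n) :=
  staircase n ∪ {v | v.1.val + v.2.val < s}

variable {n : ℕ}

lemma ncard_row_staircase (i : Fin n) : {u | (i, u) ∈ staircase n}.ncard = (n - i) / 2 := by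
  have himage : Fin.val '' {u | (i, u) ∈ staircase n} =
      ((Finset.range ((n - i) / 2)).image fun k => i.val % 2 + 2 * k : Finset ℕ) := by
    ext m
    simp only [staircase, Set.mem_image, Set.mem_ofPred_eq, Finset.coe_image, Finset.coe_range,
      Set.mem_Iio]
    constructor
    · rintro ⟨u, hu, rfl⟩
      exact ⟨u.val / 2, by omega, by omega⟩
    · rintro ⟨k, hk, rfl⟩
      exact ⟨⟨i.val % 2 + 2 * k, by omega⟩, by dsimp only; omega, rfl⟩
  rw [← Set.ncard_image_of_injective _ Fin.val_injective, himage, Set.ncard_coe_finset,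
    Finset.card_image_of_injective _ fun a b h => by simpa using h, Finset.card_range]

lemma ncard_staircase (n : ℕ) : (staircase n).ncard = n ^ 2 / 4 := by
  rw [Set.ncard_eq_sum_ncard_slice]
  simp only [ncard_row_staircase]
  rw [Fin.sum_univ_eq_sum_range (fun i => (n - i) / 2), ← Finset.sum_range_reflect,
    ← sum_range_succ_div_two]
  exact Finset.sum_congr rfl fun k hk => by rw [Finset.mem_range] at hk; congr 1; omega

lemma mem_staircaseFilled_swap {s : ℕ} {a b : Fin n} :
    (a, b) ∈ staircaseFilled n s ↔ (b, a) ∈ staircaseFilled n s := by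
  simp only [staircaseFilled, staircase, Set.mem_union, Set.mem_ofPred_eq]
  omega

lemma le_ncard_row_staircaseFilled {i j : Fin n} (hij : (i, j) ∉ staircase n) :
    j.val + (n - 1 - (i.val + j.val) + i.val % 2) / 2 ≤
      {u | u ≠ j ∧ (i, u) ∈ staircaseFilled n (i.val + j.val)}.ncard := by
  simp only [staircase, Set.mem_ofPred_eq] at hij
  set c := (n - 1 - (i.val + j.val) + i.val % 2) / 2
  -- the cells left of `j`, then every second cell right of `j`
  let g : ℕ → ℕ := fun k => if k < j.val then k else 2 * k - j.val + 1
  have hg : StrictMono g := by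
    intro a b hab
    simp only [g]
    split_ifs <;> omega
  have hsub : ((Finset.range (j.val + c)).image g : Set ℕ) ⊆
      Fin.val '' {u | u ≠ j ∧ (i, u) ∈ staircaseFilled n (i.val + j.val)} := by
    intro m hm
    obtain ⟨k, hk, rfl⟩ := Finset.mem_image.1 (Finset.mem_coe.1 hm)
    rw [Finset.mem_range] at hk
    refine ⟨⟨g k, by simp only [g]; split_ifs <;> omega⟩, ?_, rfl⟩
    simp only [staircaseFilled, staircase, Set.mem_union, Set.mem_ofPred_eq, ne_eq, Fin.ext_iff, g]
    split_ifs <;> omega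
  calc j.val + c = ((Finset.range (j.val + c)).image g).card := by
        rw [Finset.card_image_of_injective _ hg.injective, Finset.card_range]
    _ ≤ _ := by
        rw [← Set.ncard_coe_finset, ← Set.ncard_image_of_injective _ Fin.val_injective]
        exact Set.ncard_le_ncard hsub

lemma le_ncard_col_staircaseFilled {i j : Fin n} (hij : (i, j) ∉ staircase n) :
    i.val + (n - 1 - (i.val + j.val) + j.val % 2) / 2 ≤
      {x | x ≠ i ∧ (x, j) ∈ staircaseFilled n (i.val + j.val)}.ncard := by
  have hji : (j, i) ∉ staircase n := fun h => hij (by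
    simp only [staircase, Set.mem_ofPred_eq] at h ⊢; omega)
  simpa only [add_comm j.val i.val, ← mem_staircaseFilled_swap] using
    le_ncard_row_staircaseFilled hji

lemma staircaseFilled_succ_subset (s : ℕ) :
    staircaseFilled n (s + 1) ⊆
      activationStep ((⊤ : SimpleGraph (Fin n)) □ (⊤ : SimpleGraph (Fin n))) (fun _ => n - 1)
        (staircaseFilled n s) := by
  rintro ⟨i, j⟩ hv
  by_cases hold : (i, j) ∈ staircaseFilled n s
  · exact Or.inl hold
  have hs : i.val + j.val = s := by
    simp only [staircaseFilled, staircase, Set.mem_union, Set.mem_ofPred_eq] at hv hold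
    omega
  have hij : (i, j) ∉ staircase n := fun h => hold (Or.inl h)
  refine Or.inr ?_
  change n - 1 ≤ _
  rw [ncard_neighborSet_boxProd_top_inter, ← hs]
  have hrow := le_ncard_row_staircaseFilled hij
  have hcol := le_ncard_col_staircaseFilled hij
  simp only [staircase, Set.mem_ofPred_eq] at hij
  omega

theorem isDynamo_staircase (n : ℕ) :
    IsDynamo ((⊤ : SimpleGraph (Fin n)) □ (⊤ : SimpleGraph (Fin n))) (fun _ => n - 1)
      (staircase n) := by
  have key : ∀ s, staircaseFilled n s ⊆
      (activationStep ((⊤ : SimpleGraph (Fin n)) □ (⊤ : SimpleGraph (Fin n))) (fun _ => n - 1))^[s]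
        (staircase n) := by
    intro s
    induction s with
    | zero => exact Set.union_subset subset_rfl fun v hv => absurd hv (Nat.not_lt_zero _)
    | succ s ih =>
      rw [Function.iterate_succ_apply']
      exact (staircaseFilled_succ_subset s).trans (activationStep_monotone ih)
  refine ⟨2 * n, Set.eq_univ_of_univ_subset fun v _ => key _ (Or.inr ?_)⟩
  change v.1.val + v.2.val < 2 * n
  omega

end Staircase

/-- The minimum size of a dynamic monopoly of `Kₙ □ Kₙ` with every vertex having
threshold `n − 1` equals `⌊n²/4⌋`. -/
theorem stmt14 (n : ℕ) :
    dyn ((⊤ : SimpleGraph (Fin n)) □ (⊤ : SimpleGraph (Fin n))) (fun _ => n - 1)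
      = n ^ 2 / 4 := by
  have hmem : n ^ 2 / 4 ∈ {k | ∃ D : Set (Fin n × Fin n), D.ncard = k ∧
      IsDynamo ((⊤ : SimpleGraph (Fin n)) □ (⊤ : SimpleGraph (Fin n))) (fun _ => n - 1) D} :=
    ⟨staircase n, ncard_staircase n, isDynamo_staircase n⟩
  refine le_antisymm (Nat.sInf_le hmem) (le_csInf ⟨_, hmem⟩ ?_)
  rintro _ ⟨D, rfl, hD⟩
  rcases n.eq_zero_or_pos with rfl | hn
  · exact Nat.zero_le _
  have hlt : n - 1 < 2 * Nat.card (Fin n) := by rw [Nat.card_fin]; omega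
  simpa only [Nat.sub_add_cancel hn] using hD.sq_div_four_le_ncard (n - 1) hlt hlt
end

section
/- Let X₁,…,Xₙ be nonnegative independent random variables and X = ∑Xᵢ. Then for any λ ≥ 0, P(X ≤ E[X] − λ) ≤ exp(−λ²/(2∑ᵢE[Xᵢ²])). -/
/-!
For `t ≤ 0` and `x ≥ 0` we have `exp (t x) ≤ 1 + t x + t² x² / 2`, so each nonnegative `Xᵢ`
satisfies `E[exp (t Xᵢ)] ≤ exp (t E[Xᵢ] + t² E[Xᵢ²] / 2)`. By independence the same bound holds
for `X` with the sums `∑ E[Xᵢ]` and `∑ E[Xᵢ²]`, and Chernoff's bound at `t = -λ / ∑ E[Xᵢ²]` gives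
the claim.
-/

open MeasureTheory ProbabilityTheory

namespace Real

/-- Since `(1 + x + x²/2)(1 - x + x²/2) = 1 + x⁴/4 ≥ 1`, the bound for `x ≤ 0` follows from
`1 - x + x²/2 ≤ exp (-x)`. -/
lemma exp_le_one_add_add_sq_div_two {x : ℝ} (hx : x ≤ 0) : exp x ≤ 1 + x + x ^ 2 / 2 := by
  have h_neg : 1 - x + x ^ 2 / 2 ≤ exp (-x) := by
    simpa [sub_eq_add_neg] using quadratic_le_exp_of_nonneg (neg_nonneg.mpr hx)
  have h_one : 1 ≤ (1 + x + x ^ 2 / 2) * exp (-x) :=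
    calc (1 : ℝ) ≤ (1 + x + x ^ 2 / 2) * (1 - x + x ^ 2 / 2) := by nlinarith [sq_nonneg (x ^ 2)]
      _ ≤ (1 + x + x ^ 2 / 2) * exp (-x) := by gcongr; nlinarith [sq_nonneg (x + 1)]
  rwa [← div_le_iff₀ (exp_pos _), one_div, ← exp_neg, neg_neg] at h_one

end Real

namespace ProbabilityTheory

variable {Ω : Type*} {mΩ : MeasurableSpace Ω} {μ : Measure Ω}

lemma integrable_exp_mul_of_nonpos_of_nonneg [IsFiniteMeasure μ] {Y : Ω → ℝ} {t : ℝ}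
    (hY : AEMeasurable Y μ) (h_nonneg : 0 ≤ᵐ[μ] Y) (ht : t ≤ 0) :
    Integrable (fun ω ↦ Real.exp (t * Y ω)) μ := by
  refine .of_mem_Icc 0 1 (Real.measurable_exp.comp_aemeasurable (hY.const_mul t)) ?_
  filter_upwards [h_nonneg] with ω hω
  exact ⟨(Real.exp_pos _).le, Real.exp_le_one_iff.mpr (mul_nonpos_of_nonpos_of_nonneg ht hω)⟩

lemma mgf_le_exp_of_nonneg [IsProbabilityMeasure μ] {Y : Ω → ℝ} {t : ℝ}
    (hY : AEMeasurable Y μ) (h_nonneg : 0 ≤ᵐ[μ] Y) (h_sq : Integrable (fun ω ↦ Y ω ^ 2) μ)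
    (ht : t ≤ 0) :
    mgf Y μ t ≤ Real.exp (t * ∫ ω, Y ω ∂μ + t ^ 2 / 2 * ∫ ω, Y ω ^ 2 ∂μ) := by
  have h_int : Integrable Y μ :=
    ((memLp_two_iff_integrable_sq hY.aestronglyMeasurable).2 h_sq).integrable one_le_two
  have h_lin : Integrable (fun ω ↦ t * Y ω) μ := h_int.const_mul t
  have h_quad : Integrable (fun ω ↦ t ^ 2 / 2 * Y ω ^ 2) μ := h_sq.const_mul _
  have h_poly : Integrable (fun ω ↦ t * Y ω + t ^ 2 / 2 * Y ω ^ 2) μ := h_lin.add h_quad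
  calc mgf Y μ t ≤ ∫ ω, (1 + (t * Y ω + t ^ 2 / 2 * Y ω ^ 2)) ∂μ := by
        refine integral_mono_ae (integrable_exp_mul_of_nonpos_of_nonneg hY h_nonneg ht)
          ((integrable_const 1).add h_poly) ?_
        filter_upwards [h_nonneg] with ω hω
        exact (Real.exp_le_one_add_add_sq_div_two (mul_nonpos_of_nonpos_of_nonneg ht hω)).trans_eq
          (by ring)
    _ = t * ∫ ω, Y ω ∂μ + t ^ 2 / 2 * ∫ ω, Y ω ^ 2 ∂μ + 1 := by
        rw [integral_add (integrable_const 1) h_poly, integral_add h_lin h_quad,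
          integral_const_mul, integral_const_mul]
        simp [add_comm]
    _ ≤ _ := Real.add_one_le_exp _

lemma iIndepFun.mgf_sum_le_exp_of_nonneg {ι : Type*} {X : ι → Ω → ℝ} {t : ℝ}
    (h_indep : iIndepFun X μ) (h_meas : ∀ i, AEMeasurable (X i) μ)
    (h_nonneg : ∀ i, 0 ≤ᵐ[μ] X i) (h_sq : ∀ i, Integrable (fun ω ↦ X i ω ^ 2) μ)
    (ht : t ≤ 0) (s : Finset ι) :
    mgf (∑ i ∈ s, X i) μ t ≤
      Real.exp (t * ∑ i ∈ s, ∫ ω, X i ω ∂μ + t ^ 2 / 2 * ∑ i ∈ s, ∫ ω, X i ω ^ 2 ∂μ) := by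
  have := h_indep.isProbabilityMeasure
  rw [h_indep.mgf_sum₀ h_meas, Finset.mul_sum, Finset.mul_sum, ← Finset.sum_add_distrib,
    Real.exp_sum]
  exact Finset.prod_le_prod (fun i _ ↦ mgf_nonneg) fun i _ ↦
    mgf_le_exp_of_nonneg (h_meas i) (h_nonneg i) (h_sq i) ht

/-- Chernoff's bound at the optimal `t = -λ / s`. -/
lemma measureReal_le_sub_le_exp_of_mgf_le [IsFiniteMeasure μ] {Y : Ω → ℝ} {m s lam : ℝ}
    (hs : 0 < s) (h_int : ∀ t ≤ 0, Integrable (fun ω ↦ Real.exp (t * Y ω)) μ)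
    (h_mgf : ∀ t ≤ 0, mgf Y μ t ≤ Real.exp (t * m + t ^ 2 / 2 * s)) (hlam : 0 ≤ lam) :
    μ.real {ω | Y ω ≤ m - lam} ≤ Real.exp (-(lam ^ 2) / (2 * s)) := by
  have ht : -lam / s ≤ 0 := div_nonpos_of_nonpos_of_nonneg (neg_nonpos.mpr hlam) hs.le
  calc μ.real {ω | Y ω ≤ m - lam}
      ≤ Real.exp (-(-lam / s) * (m - lam)) * mgf Y μ (-lam / s) :=
        measure_le_le_exp_mul_mgf _ ht (h_int _ ht)
    _ ≤ Real.exp (-(-lam / s) * (m - lam)) *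
          Real.exp (-lam / s * m + (-lam / s) ^ 2 / 2 * s) := by
        gcongr; exact h_mgf _ ht
    _ = Real.exp (-(lam ^ 2) / (2 * s)) := by
        rw [← Real.exp_add]; congr 1; field_simp; ring

end ProbabilityTheory

/-- McDiarmid's lower-tail inequality: if `X₁, …, Xₙ` are nonnegative independent random
variables and `X = ∑ Xᵢ`, then for every `λ ≥ 0`,
`P(X ≤ E[X] − λ) ≤ exp(−λ²/(2 ∑ E[Xᵢ²]))`. -/
theorem stmt16 {Ω : Type*} {mΩ : MeasurableSpace Ω} (μ : Measure Ω)
    [IsProbabilityMeasure μ] (n : ℕ) (X : Fin n → Ω → ℝ)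
    (hmeas : ∀ i, Measurable (X i))
    (hnonneg : ∀ i ω, 0 ≤ X i ω)
    (hind : iIndepFun X μ)
    (hint : ∀ i, Integrable (fun ω => X i ω ^ 2) μ)
    (lam : ℝ) (hlam : 0 ≤ lam) :
    (μ {ω | ∑ i, X i ω ≤ (∑ i, ∫ ω', X i ω' ∂μ) - lam}).toReal
      ≤ Real.exp (-(lam ^ 2) / (2 * ∑ i, ∫ ω', X i ω' ^ 2 ∂μ)) := by
  have h_meas i : AEMeasurable (X i) μ := (hmeas i).aemeasurable
  have h_nonneg i : 0 ≤ᵐ[μ] X i := .of_forall (hnonneg i)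
  have h_sum_apply ω : ∑ i, X i ω = (∑ i, X i) ω := (Finset.sum_apply ω _ X).symm
  simp_rw [h_sum_apply]
  have h_var : 0 ≤ ∑ i, ∫ ω, X i ω ^ 2 ∂μ :=
    Finset.sum_nonneg fun i _ ↦ integral_nonneg fun ω ↦ sq_nonneg (X i ω)
  rcases h_var.eq_or_lt with h_zero | h_pos
  · -- `-(λ²) / 0 = 0` in Lean, so the bound degenerates to `P(…) ≤ 1`.
    rw [← h_zero, mul_zero, div_zero, Real.exp_zero]
    exact measureReal_le_one
  · refine measureReal_le_sub_le_exp_of_mgf_le h_pos (fun t ht ↦ ?_)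
      (fun t ht ↦ hind.mgf_sum_le_exp_of_nonneg h_meas h_nonneg hint ht _) hlam
    exact integrable_exp_mul_of_nonpos_of_nonneg (Finset.aemeasurable_sum _ fun i _ ↦ h_meas i)
      (.of_forall (Finset.sum_nonneg fun i _ ↦ hnonneg i : 0 ≤ ∑ i, X i)) ht
end

section
/- Let F be a family of graphs with threshold assignments such that there is a constant δ > 0 with min{τ(v) : v ∈ V(G)} ≥ ε(G) + δ for every G ∈ F, where ε(G) = |E(G)|/|V(G)|. Then F is dynamo-unbounded: there exists a function f with f(x) → ∞ as x → ∞ such that dyn(G) ≥ f(|V(G)|) for every G ∈ F (indeed one may take f(n) = nδ/t_max when thresholds are bounded, or directly dyn(G) ≥ |V(G)|(1 − ε(G)/min τ) ≥ |V(G)|·δ/(ε(G)+δ)). -/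
/-!
Orient each edge towards the endpoint that became active first. A vertex outside a dynamo `D`
has at least `t = min τ` neighbours activated strictly before it, so
`(n - |D|) t ≤ |E| ≤ n (t - δ)`, i.e. `|D| t ≥ δ n`. Unless `D` is everything, the first vertex to
activate has at most `|D|` active neighbours, so `|D| ≥ t` and hence `|D|² ≥ δ n`.
Thus `dyn ≥ min (√(δ n)) n`.
-/

open SimpleGraph

namespace SimpleGraph

variable {V : Type*} (G : SimpleGraph V) (τ : V → ℕ)

theorem sum_ncard_neighborSet_inter_lt_le_ncard_edgeSet [Fintype V] {α : Type*} [Preorder α]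
    (r : V → α) : ∑ v, (G.neighborSet v ∩ {u | r u < r v}).ncard ≤ G.edgeSet.ncard := by
  classical
  simp only [Set.ncard_eq_toFinset_card']
  rw [← Finset.card_sigma]
  refine Finset.card_le_card_of_injOn (fun p => s(p.1, p.2)) ?_ ?_
  · rintro ⟨v, u⟩ huv
    simp_all
  · rintro ⟨v, u⟩ huv ⟨v', u'⟩ huv' h
    simp only [Finset.coe_sigma, Set.mem_sigma_iff, Set.coe_toFinset, Set.mem_inter_iff,
      mem_neighborSet, Set.mem_ofPred_eq, Sym2.eq_iff, Sigma.mk.injEq, heq_eq_eq] at huv huv' h ⊢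
    rcases h with h | ⟨rfl, rfl⟩
    · exact h
    · exact absurd huv.2.2 huv'.2.2.not_gt

/-- Junk value `0` (`sInf ∅`) when `v` never becomes active. -/
noncomputable def activationTime (D : Set V) (v : V) : ℕ :=
  sInf {i | v ∈ (activationStep G τ)^[i] D}

variable {G τ} {D : Set V}

theorem activationTime_le {v : V} {i : ℕ} (h : v ∈ (activationStep G τ)^[i] D) :
    activationTime G τ D v ≤ i :=
  Nat.sInf_le h

theorem IsDynamo.mem_iterate_activationTime (hD : IsDynamo G τ D) (v : V) :
    v ∈ (activationStep G τ)^[activationTime G τ D v] D := by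
  obtain ⟨j, hj⟩ := hD
  exact Nat.sInf_mem (s := {i | v ∈ (activationStep G τ)^[i] D}) ⟨j, by simp [hj]⟩

theorem IsDynamo.threshold_le_ncard_earlier_neighbors [Finite V] (hD : IsDynamo G τ D) {v : V}
    (hv : v ∉ D) : τ v ≤ (G.neighborSet v ∩
      {u | activationTime G τ D u < activationTime G τ D v}).ncard := by
  have hmem := hD.mem_iterate_activationTime v
  obtain ⟨i, hi⟩ : ∃ i, activationTime G τ D v = i + 1 :=
    Nat.exists_eq_add_one.mpr (Nat.pos_of_ne_zero fun h => hv (by simpa [h] using hmem))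
  rw [hi, Function.iterate_succ_apply'] at hmem
  have hnot : v ∉ (activationStep G τ)^[i] D := fun h => by
    have := activationTime_le h
    omega
  refine (hmem.resolve_left hnot).trans (Set.ncard_le_ncard ?_)
  refine Set.inter_subset_inter_right _ fun u hu => ?_
  have := activationTime_le hu
  simp only [Set.mem_ofPred_eq]
  omega

theorem IsDynamo.ncard_compl_mul_le [Finite V] (hD : IsDynamo G τ D) {t : ℕ}
    (ht : ∀ v, t ≤ τ v) : Dᶜ.ncard * t ≤ G.edgeSet.ncard := by
  classical
  have := Fintype.ofFinite V
  set r := activationTime G τ D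
  calc Dᶜ.ncard * t = Dᶜ.toFinset.card • t := by rw [Set.ncard_eq_toFinset_card', smul_eq_mul]
    _ ≤ ∑ v ∈ Dᶜ.toFinset, τ v := Finset.card_nsmul_le_sum _ _ _ fun v _ => ht v
    _ ≤ ∑ v ∈ Dᶜ.toFinset, (G.neighborSet v ∩ {u | r u < r v}).ncard :=
      Finset.sum_le_sum fun v hv => hD.threshold_le_ncard_earlier_neighbors (by simpa using hv)
    _ ≤ ∑ v, (G.neighborSet v ∩ {u | r u < r v}).ncard :=
      Finset.sum_le_sum_of_subset (Finset.subset_univ _)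
    _ ≤ G.edgeSet.ncard := G.sum_ncard_neighborSet_inter_lt_le_ncard_edgeSet r

theorem IsDynamo.mul_card_le_ncard_mul [Fintype V] (hD : IsDynamo G τ D) {t : ℕ}
    (ht : ∀ v, t ≤ τ v) {δ : ℝ}
    (hδ : (G.edgeSet.ncard : ℝ) / Fintype.card V + δ ≤ t) :
    δ * Fintype.card V ≤ D.ncard * t := by
  have hcompl : (Dᶜ.ncard : ℝ) = Fintype.card V - D.ncard := by
    rw [← Nat.card_eq_fintype_card, ← Set.ncard_compl_add_ncard D]
    push_cast
    ring
  have hcount : ((Dᶜ.ncard * t : ℕ) : ℝ) ≤ G.edgeSet.ncard := by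
    exact_mod_cast hD.ncard_compl_mul_le ht
  rcases (Nat.cast_nonneg (α := ℝ) (Fintype.card V)).eq_or_lt with hn | hn
  · rw [← hn, mul_zero]
    positivity
  · rw [div_add' _ _ _ hn.ne', div_le_iff₀ hn] at hδ
    push_cast [hcompl] at hcount
    linarith

theorem IsDynamo.exists_threshold_le_ncard [Finite V] (hD : IsDynamo G τ D)
    (hD_ne : D ≠ Set.univ) : ∃ v, τ v ≤ D.ncard := by
  by_contra! hτ
  have hfix : activationStep G τ D = D :=
    Set.union_eq_self_of_subset_right fun v hv =>
      absurd (hv.trans (Set.ncard_le_ncard Set.inter_subset_right)) (hτ v).not_ge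
  obtain ⟨j, hj⟩ := hD
  exact hD_ne (Function.iterate_fixed hfix j ▸ hj)

variable (G τ) in
theorem exists_isDynamo_ncard_eq_dyn [Finite V] : ∃ D, IsDynamo G τ D ∧ D.ncard = dyn G τ :=
  let ⟨D, hD, hDyn⟩ := Nat.sInf_mem (s := {k | ∃ D : Set V, D.ncard = k ∧ IsDynamo G τ D})
    ⟨_, Set.univ, rfl, 0, rfl⟩
  ⟨D, hDyn, hD⟩

end SimpleGraph

open Filter

theorem stmt17_general {ι : Type*} (W : ι → Type*) [∀ j, Fintype (W j)]
    (G : ∀ j, SimpleGraph (W j)) (τ : ∀ j, W j → ℕ)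
    (δ : ℝ) (hδ : 0 < δ)
    (hmin : ∀ j, ((G j).edgeSet.ncard : ℝ) / (Fintype.card (W j)) + δ
      ≤ (sInf (Set.range (τ j)) : ℕ)) :
    ∃ f : ℕ → ℝ, Tendsto f atTop atTop ∧
      ∀ j, f (Fintype.card (W j)) ≤ dyn (G j) (τ j) := by
  refine ⟨fun n => √(δ * n) ⊓ n, tendsto_inf_atTop _
    (Real.tendsto_sqrt_atTop.comp (tendsto_natCast_atTop_atTop.const_mul_atTop hδ))
    tendsto_natCast_atTop_atTop, fun j => ?_⟩
  obtain ⟨D, hD, hDdyn⟩ := (G j).exists_isDynamo_ncard_eq_dyn (τ j)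
  rw [← hDdyn]
  set t := sInf (Set.range (τ j))
  have hτ_ge : ∀ v, t ≤ τ j v := fun v => Nat.sInf_le ⟨v, rfl⟩
  have hδD := hD.mul_card_le_ncard_mul hτ_ge (hmin j)
  by_cases hD_univ : D = Set.univ
  · simp [hD_univ, Set.ncard_univ]
  · obtain ⟨v, hv⟩ := hD.exists_threshold_le_ncard hD_univ
    have ht : (t : ℝ) ≤ D.ncard := by exact_mod_cast (hτ_ge v).trans hv
    refine inf_le_of_left_le (Real.sqrt_le_left (by positivity) |>.mpr ?_)
    calc δ * Fintype.card (W j) ≤ D.ncard * t := hδD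
      _ ≤ D.ncard ^ 2 := by rw [sq]; gcongr

/-- If every member `(G j, τ j)` of a family of graphs with threshold assignments satisfies
`min τ ≥ ε(G) + δ` for a fixed constant `δ > 0`, then the family is dynamo-unbounded:
there is `f : ℕ → ℝ` with `f → ∞` and `dyn(G j) ≥ f(|V(G j)|)` for every member. -/
theorem stmt17 {ι : Type*} (W : ι → Type*) [∀ j, Fintype (W j)] [∀ j, Nonempty (W j)]
    (G : ∀ j, SimpleGraph (W j)) (τ : ∀ j, W j → ℕ)
    (hτpos : ∀ j v, 0 < τ j v)
    (hτdeg : ∀ j v, τ j v ≤ ((G j).neighborSet v).ncard)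
    (δ : ℝ) (hδ : 0 < δ)
    (hmin : ∀ j, ((G j).edgeSet.ncard : ℝ) / (Fintype.card (W j)) + δ
      ≤ (sInf (Set.range (τ j)) : ℕ)) :
    ∃ f : ℕ → ℝ, Tendsto f atTop atTop ∧
      ∀ j, f (Fintype.card (W j)) ≤ dyn (G j) (τ j) :=
  stmt17_general W G τ δ hδ hmin
end
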